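/- arXiv:2012.02418 — 5 statements merged into one kernel-verified Lean document; each statement's English description precedes it below -/
import Mathlib

section
/- Let X be a proper complete CAT(0) space, let b be a geodesic ray in X starting at a basepoint o, let κ be a sublinear function and n ≥ 0. Then b is the unique geodesic ray starting at o contained in the (κ,n)-neighborhood of b; that is, if c is a geodesic ray with c(0) = o and d(c(t), b) ≤ n·κ(t) for all t ≥ 0, then c = b. -/
open Metric Set Filter

variable {X : Type*} [MetricSpace X]

/-- A unit-speed geodesic ray, defined on `[0,∞)`. -/
def IsGeodesicRay (c : ℝ → X) : Prop :=
  ∀ s t : ℝ, 0 ≤ s → 0 ≤ t → dist (c s) (c t) = |s - t|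

/-- The image of a geodesic ray, i.e. `c([0,∞))`. -/
def rayImage (c : ℝ → X) : Set X := c '' Set.Ici (0 : ℝ)

/-- A geodesic segment from `x` to `y`, parametrized proportionally to arc length on `[0,1]`. -/
def IsGeodesicSegment (γ : ℝ → X) (x y : X) : Prop :=
  γ 0 = x ∧ γ 1 = y ∧
  ∀ s ∈ Set.Icc (0:ℝ) 1, ∀ t ∈ Set.Icc (0:ℝ) 1,
    dist (γ s) (γ t) = |s - t| * dist x y

/-- A geodesic metric space: any two points are joined by a geodesic segment. -/
def GeodesicSpace (X : Type*) [MetricSpace X] : Prop :=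
  ∀ x y : X, ∃ γ : ℝ → X, IsGeodesicSegment γ x y

/-- CAT(0): a geodesic space satisfying the (CN-type) comparison inequality
`d(z,γ(t))² ≤ (1-t)d(z,x)² + t d(z,y)² - t(1-t)d(x,y)²` along all geodesics,
which is equivalent to the Euclidean comparison-triangle definition. -/
def CAT0Space (X : Type*) [MetricSpace X] : Prop :=
  GeodesicSpace X ∧
  ∀ (γ : ℝ → X) (x y : X), IsGeodesicSegment γ x y →
    ∀ z : X, ∀ t ∈ Set.Icc (0:ℝ) 1,
      dist z (γ t) ^ 2 ≤
        (1 - t) * dist z x ^ 2 + t * dist z y ^ 2 - t * (1 - t) * dist x y ^ 2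

/-- Convex subset: contains every geodesic segment between two of its points. -/
def ConvexSubset (C : Set X) : Prop :=
  ∀ x ∈ C, ∀ y ∈ C, ∀ γ : ℝ → X, IsGeodesicSegment γ x y →
    ∀ t ∈ Set.Icc (0:ℝ) 1, γ t ∈ C

/-- The Busemann function of a ray `c`:
`b_c(x) = lim_{t→∞} [d(x,c(t)) - t]`, realized as the infimum of the
non-increasing quantity `d(x,c(t)) - t` over `t ≥ 0`. -/
noncomputable def busemann (c : ℝ → X) (x : X) : ℝ :=
  ⨅ t : Set.Ici (0:ℝ), (dist x (c (t : ℝ)) - (t : ℝ))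

/-- `proj` is a nearest-point projection onto the set `A`. -/
def IsProjOnto (proj : X → X) (A : Set X) : Prop :=
  ∀ x : X, proj x ∈ A ∧ ∀ y ∈ A, dist x (proj x) ≤ dist x y

/-- A sublinear function `κ : [0,∞) → [1,∞)` with `κ(t)/t → 0`. -/
def Sublinear (κ : ℝ → ℝ) : Prop :=
  (∀ t : ℝ, 0 ≤ t → 1 ≤ κ t) ∧
  Tendsto (fun t => κ t / t) atTop (nhds 0)

/-- `c` is `κ`-contracting (w.r.t. the nearest-point projection `proj` onto `c`,
basepoint `o`): every ball disjoint from `c` projects to a set of diameter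
at most `n·κ(‖center‖)`. -/
def KappaContracting (o : X) (c : ℝ → X) (proj : X → X) (κ : ℝ → ℝ) : Prop :=
  ∃ n : ℝ, 0 ≤ n ∧ ∀ (x : X) (r : ℝ), 0 < r →
    Metric.closedBall x r ∩ rayImage c = ∅ →
    Metric.diam (proj '' Metric.closedBall x r) ≤ n * κ (dist o x)

/-- Bounded geodesic image property of the ray `c` (w.r.t. projection `proj`):
for every geodesic ray `c'` with the same start point there is `n ≥ 0` such that
every ball centered on `c'` and disjoint from `c` projects to a set of diameter ≤ `n`. -/
def BGIP (c : ℝ → X) (proj : X → X) : Prop :=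
  ∀ c' : ℝ → X, IsGeodesicRay c' → c' 0 = c 0 →
    ∃ n : ℝ, 0 ≤ n ∧ ∀ (s r : ℝ), 0 ≤ s →
      Metric.closedBall (c' s) r ∩ rayImage c = ∅ →
      Metric.diam (proj '' Metric.closedBall (c' s) r) ≤ n

/-- Two rays are asymptotic (define the same boundary point). -/
def Asymptotic (c c' : ℝ → X) : Prop :=
  ∃ M : ℝ, ∀ t : ℝ, 0 ≤ t → dist (c t) (c' t) ≤ M

/-- `h` is convex along geodesics. -/
def ConvexAlongGeodesics (h : X → ℝ) : Prop :=
  ∀ (γ : ℝ → X) (x y : X), IsGeodesicSegment γ x y →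
    ∀ s ∈ Set.Icc (0:ℝ) 1, h (γ s) ≤ (1 - s) * h x + s * h y
lemma ray_segment (c : ℝ → X) (hc : IsGeodesicRay c) (s : ℝ) (hs : 0 ≤ s) :
    IsGeodesicSegment (fun r => c (r * s)) (c 0) (c s) := by
  refine ⟨by simp, by simp, ?_⟩
  intro r1 hr1 r2 hr2
  have h := hc (r1 * s) (r2 * s) (mul_nonneg hr1.1 hs) (mul_nonneg hr2.1 hs)
  have hd : dist (c 0) (c s) = s := by
    rw [hc 0 s le_rfl hs, zero_sub, abs_neg, abs_of_nonneg hs]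
  simp only [h, hd, ← sub_mul, abs_mul, abs_of_nonneg hs]

lemma half_step (hX : CAT0Space X) {c b : ℝ → X} (hc : IsGeodesicRay c)
    (hb : IsGeodesicRay b) (hcb : c 0 = b 0) {s : ℝ} (hs : 0 ≤ s) :
    dist (c (s / 2)) (b (s / 2)) ≤ dist (c s) (b s) / 2 := by
  have hγ := ray_segment c hc s hs
  have hσ := ray_segment b hb s hs
  have hmem : (1/2 : ℝ) ∈ Set.Icc (0:ℝ) 1 := by norm_num
  have h1 := hX.2 _ _ _ hγ (b (s/2)) (1/2) hmem
  have h2 := hX.2 _ _ _ hσ (c s) (1/2) hmem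
  simp only [show (1/2 : ℝ) * s = s / 2 by ring] at h1 h2
  have e1 : dist (b (s/2)) (c (s/2)) = dist (c (s/2)) (b (s/2)) := dist_comm _ _
  have e2 : dist (b (s/2)) (c 0) = s/2 := by
    rw [hcb, hb (s/2) 0 (by linarith) le_rfl, sub_zero, abs_of_nonneg (by linarith)]
  have e3 : dist (c 0) (c s) = s := by
    rw [hc 0 s le_rfl hs, zero_sub, abs_neg, abs_of_nonneg hs]
  have e4 : dist (c s) (b 0) = s := by
    rw [← hcb, hc s 0 hs le_rfl, sub_zero, abs_of_nonneg hs]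
  have e5 : dist (b 0) (b s) = s := by
    rw [hb 0 s le_rfl hs, zero_sub, abs_neg, abs_of_nonneg hs]
  have e6 : dist (b (s/2)) (c s) = dist (c s) (b (s/2)) := dist_comm _ _
  rw [e1, e2, e6, e3] at h1
  rw [e4, e5] at h2
  have hd0 : (0:ℝ) ≤ dist (c (s/2)) (b (s/2)) := dist_nonneg
  have hD0 : (0:ℝ) ≤ dist (c s) (b s) := dist_nonneg
  nlinarith [h1, h2, hd0, hD0, sq_nonneg (dist (c (s/2)) (b (s/2)) + dist (c s) (b s) / 2)]

/-- uniqueness of geodesic rays in a `(κ,n)`-neighborhood. -/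
theorem unique_ray_in_kappa_neighborhood
    {X : Type*} [MetricSpace X] [ProperSpace X] [CompleteSpace X]
    (hX : CAT0Space X) (o : X)
    (b : ℝ → X) (hb : IsGeodesicRay b) (hbo : b 0 = o)
    (κ : ℝ → ℝ) (hκ : Sublinear κ) (n : ℝ) (hn : 0 ≤ n)
    (c : ℝ → X) (hc : IsGeodesicRay c) (hco : c 0 = o)
    (hnbhd : ∀ t : ℝ, 0 ≤ t → Metric.infDist (c t) (rayImage b) ≤ n * κ t) :
    ∀ t : ℝ, 0 ≤ t → c t = b t := by
  -- distance at the endpoints is controlled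
  have hcb : c 0 = b 0 := by rw [hco, hbo]
  have top : ∀ T : ℝ, 0 ≤ T → dist (c T) (b T) ≤ 2 * (n * κ T) := by
    intro T hT
    refine le_of_forall_pos_le_add ?_
    intro ε hε
    have hne : (rayImage b).Nonempty := ⟨b 0, ⟨0, Set.self_mem_Ici, rfl⟩⟩
    have hlt : Metric.infDist (c T) (rayImage b) < n * κ T + ε / 2 :=
      lt_of_le_of_lt (hnbhd T hT) (by linarith)
    obtain ⟨y, hy, hdy⟩ := (Metric.infDist_lt_iff hne).mp hlt
    obtain ⟨u, hu, rfl⟩ := hy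
    have hu' : (0:ℝ) ≤ u := hu
    have hbu : dist (b u) (b 0) = u := by
      rw [hb u 0 hu' le_rfl, sub_zero, abs_of_nonneg hu']
    have hcT : dist (c T) (c 0) = T := by
      rw [hc T 0 hT le_rfl, sub_zero, abs_of_nonneg hT]
    have habs : |u - T| ≤ dist (b u) (c T) := by
      have := abs_dist_sub_le (b u) (c T) (b 0)
      rw [hbu, ← hcb, hcT] at this
      exact this
    have hbuT : dist (b u) (b T) = |u - T| := hb u T hu' hT
    calc dist (c T) (b T) ≤ dist (c T) (b u) + dist (b u) (b T) := dist_triangle _ _ _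
      _ = dist (c T) (b u) + |u - T| := by rw [hbuT]
      _ ≤ dist (c T) (b u) + dist (b u) (c T) := by linarith
      _ = 2 * dist (c T) (b u) := by rw [dist_comm (b u) (c T)]; ring
      _ ≤ 2 * (n * κ T) + ε := by linarith
  intro t ht
  rcases eq_or_lt_of_le ht with h0 | ht
  · rw [← h0, hco, hbo]
  -- iterate the halving
  have iter : ∀ k : ℕ, dist (c t) (b t) ≤ dist (c (2 ^ k * t)) (b (2 ^ k * t)) / 2 ^ k := by
    intro k
    induction k with
    | zero => simp
    | succ k ih =>
      have hs : (0:ℝ) ≤ 2 ^ (k+1) * t := by positivity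
      have h := half_step hX hc hb hcb hs
      have he : (2 ^ (k+1) * t) / 2 = 2 ^ k * t := by ring
      rw [he] at h
      calc dist (c t) (b t) ≤ dist (c (2 ^ k * t)) (b (2 ^ k * t)) / 2 ^ k := ih
        _ ≤ (dist (c (2 ^ (k+1) * t)) (b (2 ^ (k+1) * t)) / 2) / 2 ^ k := by
            apply div_le_div_of_nonneg_right h (by positivity) |>.trans_eq rfl
        _ = dist (c (2 ^ (k+1) * t)) (b (2 ^ (k+1) * t)) / 2 ^ (k+1) := by ring
  have bound : ∀ k : ℕ, dist (c t) (b t) ≤ (2 * n * t) * (κ (2 ^ k * t) / (2 ^ k * t)) := by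
    intro k
    have hTpos : (0:ℝ) < 2 ^ k * t := by positivity
    have h1 := iter k
    have h2 := top (2 ^ k * t) hTpos.le
    have h3 : dist (c (2 ^ k * t)) (b (2 ^ k * t)) / 2 ^ k ≤ 2 * (n * κ (2 ^ k * t)) / 2 ^ k :=
      div_le_div_of_nonneg_right h2 (by positivity)
    have h4 : 2 * (n * κ (2 ^ k * t)) / 2 ^ k = (2 * n * t) * (κ (2 ^ k * t) / (2 ^ k * t)) := by
      field_simp
    linarith [h4 ▸ h3]
  have htend : Tendsto (fun k : ℕ => (2 * n * t) * (κ (2 ^ k * t) / (2 ^ k * t))) atTop (nhds 0) := by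
    have hpow : Tendsto (fun k : ℕ => (2:ℝ) ^ k * t) atTop atTop :=
      (tendsto_pow_atTop_atTop_of_one_lt one_lt_two).atTop_mul_const ht
    have := (hκ.2.comp hpow).const_mul (2 * n * t)
    simpa using this
  have hle : dist (c t) (b t) ≤ 0 :=
    ge_of_tendsto htend (Filter.Eventually.of_forall bound)
  have : dist (c t) (b t) = 0 := le_antisymm hle dist_nonneg
  exact dist_eq_zero.mp this
end

section
/- Let X be a proper complete CAT(0) space, and let b and c be distinct geodesic rays with b(0) = c(0) = o. If b is κ-contracting (for some sublinear κ), then the nearest-point projection π_b(c) of the image of c onto b is a bounded set. -/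
open Metric Set Filter

variable {X : Type*} [MetricSpace X]

/-- Comparison for two geodesic segments with a common start point in a CAT(0)
space: `d(f(θ), g(θ)) ≤ θ · d(x₁, x₂)`. -/
lemma seg_comp {X : Type*} [MetricSpace X] (hX : CAT0Space X)
    {f g : ℝ → X} {w x₁ x₂ : X}
    (hf : IsGeodesicSegment f w x₁) (hg : IsGeodesicSegment g w x₂)
    {θ : ℝ} (hθ0 : 0 ≤ θ) (hθ1 : θ ≤ 1) :
    dist (f θ) (g θ) ≤ θ * dist x₁ x₂ := by
  have hCN := hX.2
  have hmem : θ ∈ Set.Icc (0:ℝ) 1 := ⟨hθ0, hθ1⟩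
  have h0 : (0:ℝ) ∈ Set.Icc (0:ℝ) 1 := by norm_num
  have hgw : dist (g θ) w = θ * dist w x₂ := by
    have h := hg.2.2 θ hmem 0 h0
    rw [hg.1, sub_zero, abs_of_nonneg hθ0] at h
    exact h
  have CN1 := hCN f w x₁ hf (g θ) θ hmem
  rw [dist_comm (g θ) (f θ)] at CN1
  rw [dist_comm (g θ) x₁] at CN1
  rw [hgw] at CN1
  have CN2 := hCN g w x₂ hg x₁ θ hmem
  rw [dist_comm x₁ w] at CN2
  have hsq : dist (f θ) (g θ) ^ 2 ≤ (θ * dist x₁ x₂) ^ 2 := by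
    nlinarith [CN1, mul_le_mul_of_nonneg_left CN2 hθ0]
  calc dist (f θ) (g θ) = Real.sqrt (dist (f θ) (g θ) ^ 2) := (Real.sqrt_sq dist_nonneg).symm
    _ ≤ Real.sqrt ((θ * dist x₁ x₂) ^ 2) := Real.sqrt_le_sqrt hsq
    _ = θ * dist x₁ x₂ := Real.sqrt_sq (mul_nonneg hθ0 dist_nonneg)

set_option maxHeartbeats 1000000 in
/-- a κ-contracting ray receives a bounded projection from any
other ray with the same start point. -/
theorem contracting_ray_bounded_projection
    {X : Type*} [MetricSpace X] [ProperSpace X] [CompleteSpace X]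
    (hX : CAT0Space X) (o : X)
    (b : ℝ → X) (hb : IsGeodesicRay b) (hbo : b 0 = o)
    (c : ℝ → X) (hc : IsGeodesicRay c) (hco : c 0 = o)
    (hdist : ∃ t : ℝ, 0 ≤ t ∧ b t ≠ c t)
    (proj : X → X) (hproj : IsProjOnto proj (rayImage b))
    (κ : ℝ → ℝ) (hκ : Sublinear κ)
    (hcontr : KappaContracting o b proj κ) :
    Bornology.IsBounded (proj '' rayImage c) := by
  obtain ⟨hGeo, hCN⟩ := hX
  obtain ⟨n, hn0, hcon⟩ := hcontr
  obtain ⟨hκ1, hκ2⟩ := hκ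
  have homem : o ∈ rayImage b := ⟨0, Set.self_mem_Ici, hbo⟩
  -- basic distance facts
  have hdb : ∀ u : ℝ, 0 ≤ u → dist o (b u) = u := by
    intro u hu
    rw [← hbo, hb 0 u le_rfl hu, zero_sub, abs_neg, abs_of_nonneg hu]
  have hdc : ∀ u : ℝ, 0 ≤ u → dist o (c u) = u := by
    intro u hu
    rw [← hco, hc 0 u le_rfl hu, zero_sub, abs_neg, abs_of_nonneg hu]
  -- the projection lands on the ray at parameter `dist o (proj x)`
  have hprojeq : ∀ x : X, proj x = b (dist o (proj x)) := by
    intro x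
    obtain ⟨a, ha, heq⟩ := (hproj x).1
    have h : dist o (proj x) = a := by rw [← heq, hdb a ha]
    rw [h, heq]
  -- geodesic segments inside the ray b
  have hbseg : ∀ a₁ a₂ : ℝ, 0 ≤ a₁ → 0 ≤ a₂ →
      IsGeodesicSegment (fun y => b (a₁ + y * (a₂ - a₁))) (b a₁) (b a₂) := by
    intro a₁ a₂ h₁ h₂
    have harg : ∀ y : ℝ, 0 ≤ y → y ≤ 1 → 0 ≤ a₁ + y * (a₂ - a₁) := by
      intro y hy0 hy1
      rcases le_total a₁ a₂ with h | h
      · nlinarith only [h₁, h₂, hy0, hy1, h]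
      · nlinarith only [h₁, h₂, hy0, hy1, h]
    refine ⟨?_, ?_, ?_⟩
    · show b (a₁ + 0 * (a₂ - a₁)) = b a₁
      norm_num
    · show b (a₁ + 1 * (a₂ - a₁)) = b a₂
      rw [show a₁ + 1 * (a₂ - a₁) = a₂ by ring]
    intro y hy z hz
    rw [hb _ _ (harg y hy.1 hy.2) (harg z hz.1 hz.2), hb a₁ a₂ h₁ h₂,
      show a₁ + y * (a₂ - a₁) - (a₁ + z * (a₂ - a₁)) = (y - z) * (a₂ - a₁) by ring,
      abs_mul, abs_sub_comm a₂ a₁]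
  -- Pythagorean inequality for the projection
  have pyth : ∀ (x : X) (u : ℝ), 0 ≤ u →
      dist x (proj x) ^ 2 + (u - dist o (proj x)) ^ 2 ≤ dist x (b u) ^ 2 := by
    intro x u hu
    have ha0 : (0:ℝ) ≤ dist o (proj x) := dist_nonneg
    set a := dist o (proj x) with hadef
    clear_value a
    have hpx : proj x = b a := by rw [hadef]; exact hprojeq x
    have hseg := hbseg a u (hadef ▸ ha0) hu
    have ha0' : (0:ℝ) ≤ a := hadef ▸ ha0
    have hmono : dist x (b a) ^ 2 + (u - a) ^ 2 ≤ dist x (b u) ^ 2 := by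
      by_contra hcon2
      push_neg at hcon2
      have key : ∀ θ : ℝ, 0 < θ → θ ≤ 1 →
          (1 - θ) * (u - a) ^ 2 ≤ dist x (b u) ^ 2 - dist x (b a) ^ 2 := by
        intro θ hθ hθ1
        have hCNa : dist x (b (a + θ * (u - a))) ^ 2 ≤
            (1 - θ) * dist x (b a) ^ 2 + θ * dist x (b u) ^ 2
              - θ * (1 - θ) * dist (b a) (b u) ^ 2 :=
          hCN _ (b a) (b u) hseg x θ ⟨hθ.le, hθ1⟩
        have hdab : dist (b a) (b u) ^ 2 = (u - a) ^ 2 := by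
          rw [hb a u ha0' hu, sq_abs]; ring
        rw [hdab] at hCNa
        have hargm : 0 ≤ a + θ * (u - a) := by
          rcases le_total a u with h | h
          · nlinarith only [ha0', hu, hθ, hθ1, h]
          · nlinarith only [ha0', hu, hθ, hθ1, h]
        have hmin : dist x (b a) ≤ dist x (b (a + θ * (u - a))) := by
          rw [← hpx]
          exact (hproj x).2 _ ⟨a + θ * (u - a), hargm, rfl⟩
        have h2 : dist x (b a) ^ 2 ≤ dist x (b (a + θ * (u - a))) ^ 2 :=
          pow_le_pow_left₀ dist_nonneg hmin 2
        have h3 : θ * ((1 - θ) * (u - a) ^ 2) ≤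
            θ * (dist x (b u) ^ 2 - dist x (b a) ^ 2) := by
          linarith only [h2, hCNa]
        exact le_of_mul_le_mul_left h3 hθ
      have hG0 : (0:ℝ) ≤ dist x (b u) ^ 2 - dist x (b a) ^ 2 := by
        have h := key 1 one_pos le_rfl
        simpa using h
      have hGM : dist x (b u) ^ 2 - dist x (b a) ^ 2 < (u - a) ^ 2 := by
        linarith only [hcon2]
      have hM0 : (0:ℝ) < (u - a) ^ 2 := lt_of_le_of_lt hG0 hGM
      have hθd := key
        (((u - a) ^ 2 - (dist x (b u) ^ 2 - dist x (b a) ^ 2)) / (2 * (u - a) ^ 2))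
        (div_pos (by linarith only [hGM]) (by linarith only [hM0]))
        (by rw [div_le_one (by linarith only [hM0])]; linarith only [hG0, hM0])
      have hrw : (1 - ((u - a) ^ 2 - (dist x (b u) ^ 2 - dist x (b a) ^ 2)) /
            (2 * (u - a) ^ 2)) * (u - a) ^ 2 =
          ((u - a) ^ 2 + (dist x (b u) ^ 2 - dist x (b a) ^ 2)) / 2 := by
        have hne : (u - a) ^ 2 ≠ 0 := hM0.ne'
        rw [sub_mul, one_mul, div_mul_eq_mul_div, mul_comm 2 ((u - a) ^ 2), ← div_div,
          mul_div_assoc, div_self hne, mul_one]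
        ring
      rw [hrw] at hθd
      linarith only [hθd, hGM]
    rw [hpx, hadef]
    exact hadef ▸ hmono
  -- uniqueness of nearest points on the ray
  have punique : ∀ (z : X) (aa : ℝ), 0 ≤ aa →
      (∀ y ∈ rayImage b, dist z (b aa) ≤ dist z y) → proj z = b aa := by
    intro z aa ha hminz
    obtain ⟨a', ha', heq⟩ := (hproj z).1
    have ha'0 : (0:ℝ) ≤ a' := ha'
    have e1 : dist z (proj z) ≤ dist z (b aa) := (hproj z).2 _ ⟨aa, ha, rfl⟩
    have e2 : dist z (b aa) ≤ dist z (proj z) := hminz _ (hproj z).1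
    have e3 : dist z (b a') = dist z (b aa) := by
      rw [heq]; exact le_antisymm e1 e2
    have hseg := hbseg a' aa ha'0 ha
    have hCNm : dist z (b (a' + (1/2) * (aa - a'))) ^ 2 ≤
        (1 - (1/2)) * dist z (b a') ^ 2 + (1/2) * dist z (b aa) ^ 2
          - (1/2) * (1 - (1/2)) * dist (b a') (b aa) ^ 2 :=
      hCN _ (b a') (b aa) hseg z (1/2) (by norm_num)
    have hargm : 0 ≤ a' + (1/2) * (aa - a') := by linarith only [ha'0, ha]
    have e4 : dist z (b aa) ≤ dist z (b (a' + (1/2) * (aa - a'))) :=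
      hminz _ ⟨a' + (1/2) * (aa - a'), hargm, rfl⟩
    have e5 : dist (b a') (b aa) ^ 2 = (aa - a') ^ 2 := by
      rw [hb a' aa ha'0 ha, sq_abs]; ring
    have e3sq : dist z (b a') ^ 2 = dist z (b aa) ^ 2 := by rw [e3]
    have e6 : (aa - a') ^ 2 ≤ 0 := by
      nlinarith only [hCNm, e3sq, e5, pow_le_pow_left₀ dist_nonneg e4 2]
    have h8 : (aa - a') ^ 2 = 0 := le_antisymm e6 (sq_nonneg _)
    have e7 : aa = a' := by
      have h9 := pow_eq_zero_iff (n := 2) (by norm_num) |>.mp h8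
      linarith only [h9]
    rw [← heq, e7]
  -- setting up divergence constants
  obtain ⟨t₁, ht₁0, hne⟩ := hdist
  have ht₁ : 0 < t₁ := by
    rcases ht₁0.eq_or_lt with h | h
    · exfalso; apply hne; rw [← h, hbo, hco]
    · exact h
  set ε := dist (b t₁) (c t₁) / t₁ with hεdef
  have hε0 : 0 < ε := div_pos (dist_pos.2 hne) ht₁
  have hε2 : ε ≤ 2 := by
    rw [hεdef, div_le_iff₀ ht₁]
    have h1 : dist (b t₁) (c t₁) ≤ dist (b t₁) o + dist o (c t₁) := dist_triangle _ _ _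
    rw [dist_comm (b t₁) o, hdb t₁ ht₁0, hdc t₁ ht₁0] at h1
    linarith only [h1]
  -- linear divergence of the two rays
  have hflin : ∀ v, t₁ ≤ v → ε * v ≤ dist (b v) (c v) := by
    intro v hv
    have hv0 : 0 < v := lt_of_lt_of_le ht₁ hv
    have hsegb : IsGeodesicSegment (fun x => b (x * v)) o (b v) := by
      refine ⟨?_, ?_, ?_⟩
      · show b (0 * v) = o
        rw [show (0:ℝ) * v = 0 by ring, hbo]
      · show b (1 * v) = b v
        rw [one_mul]
      intro x hx y hy
      rw [hb _ _ (mul_nonneg hx.1 hv0.le) (mul_nonneg hy.1 hv0.le),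
        show x * v - y * v = (x - y) * v by ring, abs_mul, abs_of_nonneg hv0.le,
        hdb v hv0.le]
    have hsegc : IsGeodesicSegment (fun x => c (x * v)) o (c v) := by
      refine ⟨?_, ?_, ?_⟩
      · show c (0 * v) = o
        rw [show (0:ℝ) * v = 0 by ring, hco]
      · show c (1 * v) = c v
        rw [one_mul]
      intro x hx y hy
      rw [hc _ _ (mul_nonneg hx.1 hv0.le) (mul_nonneg hy.1 hv0.le),
        show x * v - y * v = (x - y) * v by ring, abs_mul, abs_of_nonneg hv0.le,
        hdc v hv0.le]
    have hcmp : dist (b (t₁ / v * v)) (c (t₁ / v * v)) ≤ (t₁ / v) * dist (b v) (c v) :=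
      seg_comp ⟨hGeo, hCN⟩ hsegb hsegc (div_nonneg ht₁0 hv0.le) ((div_le_one hv0).2 hv)
    rw [div_mul_cancel₀ t₁ hv0.ne'] at hcmp
    rw [hεdef, div_mul_eq_mul_div, div_le_iff₀ ht₁]
    have h2 := mul_le_mul_of_nonneg_right hcmp hv0.le
    have h3 : t₁ / v * dist (b v) (c v) * v = t₁ * dist (b v) (c v) := by
      field_simp
    rw [h3] at h2
    linarith only [h2]
  clear_value ε
  have hdiv : ∀ v, t₁ ≤ v → ∀ u, 0 ≤ u → ε * v / 2 ≤ dist (c v) (b u) := by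
    intro v hv u hu
    have hv0 : 0 ≤ v := le_trans ht₁0 hv
    have h1 : |v - u| ≤ dist (c v) (b u) := by
      have h := abs_dist_sub_le (c v) (b u) o
      rw [dist_comm (c v) o, dist_comm (b u) o, hdc v hv0, hdb u hu] at h
      exact h
    have h2 : dist (b v) (c v) ≤ |v - u| + dist (c v) (b u) := by
      have h := dist_triangle (b v) (b u) (c v)
      rw [hb v u hv0 hu, dist_comm (b u) (c v)] at h
      exact h
    linarith only [h1, h2, hflin v hv]
  -- the slope bound α
  set α := Real.sqrt (1 - ε ^ 2 / 4) with hαdef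
  have hα0 : 0 ≤ α := Real.sqrt_nonneg _
  have hαsq : α ^ 2 = 1 - ε ^ 2 / 4 := by
    rw [hαdef]
    apply Real.sq_sqrt
    nlinarith only [hε0, hε2,
      mul_nonneg (sub_nonneg.mpr hε2) (by linarith only [hε0] : (0:ℝ) ≤ 2 + ε)]
  clear_value α
  have hα1 : α < 1 := by
    nlinarith only [sq_nonneg (α - 1), hαsq, mul_pos hε0 hε0]
  have hσle : ∀ v, t₁ ≤ v → dist o (proj (c v)) ≤ α * v := by
    intro v hv
    have hv0 : 0 ≤ v := le_trans ht₁0 hv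
    have hp := pyth (c v) 0 le_rfl
    rw [hbo] at hp
    have e : dist (c v) o = v := by rw [dist_comm]; exact hdc v hv0
    rw [e] at hp
    have hD : ε * v / 2 ≤ dist (c v) (proj (c v)) := by
      have h := hdiv v hv (dist o (proj (c v))) dist_nonneg
      rw [← hprojeq (c v)] at h
      exact h
    have hD0 : (0:ℝ) ≤ ε * v / 2 :=
      div_nonneg (mul_nonneg hε0.le hv0) (by norm_num)
    have hav : (α * v) ^ 2 = v ^ 2 - ε ^ 2 * v ^ 2 / 4 := by
      rw [mul_pow, hαsq]; ring
    have hσ2 : dist o (proj (c v)) ^ 2 ≤ (α * v) ^ 2 := by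
      linarith only [hp, pow_le_pow_left₀ hD0 hD 2, hav]
    calc dist o (proj (c v)) = Real.sqrt (dist o (proj (c v)) ^ 2) :=
          (Real.sqrt_sq dist_nonneg).symm
      _ ≤ Real.sqrt ((α * v) ^ 2) := Real.sqrt_le_sqrt hσ2
      _ = α * v := Real.sqrt_sq (mul_nonneg hα0 hv0)
  -- sublinearity constants
  set δ := (1 - α) / (8 * (n + 1)) with hδdef
  have hδ0 : 0 < δ := by
    rw [hδdef]
    exact div_pos (by linarith only [hα1]) (by linarith only [hn0])
  have hδle : δ * (8 * (n + 1)) = 1 - α := by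
    rw [hδdef]
    field_simp
  clear_value δ
  obtain ⟨R₀, hR₀⟩ : ∃ R₀ : ℝ, ∀ w ≥ R₀, |κ w / w| < δ := by
    have h := Metric.tendsto_nhds.mp hκ2 δ hδ0
    rw [eventually_atTop] at h
    obtain ⟨R₀, h⟩ := h
    refine ⟨R₀, fun w hw => ?_⟩
    have hh := h w hw
    rw [Real.dist_eq, sub_zero] at hh
    exact hh
  set R := max R₀ 1 with hRdef
  have hκlin : ∀ w, R ≤ w → κ w ≤ δ * w := by
    intro w hw
    have h1 : (1:ℝ) ≤ w := le_trans (by rw [hRdef]; exact le_max_right _ _) hw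
    have h0 : (0:ℝ) < w := by linarith only [h1]
    have h2 := (abs_lt.1 (hR₀ w (le_trans (by rw [hRdef]; exact le_max_left _ _) hw))).2
    rw [div_lt_iff₀ h0] at h2
    linarith only [h2]
  clear_value R
  set S := max (max (2 * t₁ + 2) 2) (4 * (R + 1) / ε) with hSdef
  have hS1 : 2 * t₁ + 2 ≤ S := by
    rw [hSdef]; exact le_trans (le_max_left _ _) (le_max_left _ _)
  have hS2 : (2:ℝ) ≤ S := by
    rw [hSdef]; exact le_trans (le_max_right _ _) (le_max_left _ _)
  have hS3 : 4 * (R + 1) / ε ≤ S := by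
    rw [hSdef]; exact le_max_right _ _
  clear_value S
  set B := max S (8 / (5 * (1 - α))) with hBdef
  have hSB : S ≤ B := by rw [hBdef]; exact le_max_left _ _
  have hBα : 8 / (5 * (1 - α)) ≤ B := by rw [hBdef]; exact le_max_right _ _
  clear_value B
  -- the main claim
  have main : ∀ t : ℝ, 0 ≤ t → dist o (proj (c t)) ≤ B := by
    intro t ht0
    by_contra hcontra
    push_neg at hcontra
    set s := dist o (proj (c t)) with hsdef
    have hs0 : 0 ≤ s := by rw [hsdef]; exact dist_nonneg
    have hpe : proj (c t) = b s := by rw [hsdef]; exact hprojeq (c t)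
    have hpyt0 := pyth (c t) 0 le_rfl
    rw [hbo, ← hsdef] at hpyt0
    clear_value s
    have hsB : B < s := hcontra
    have hsS : S < s := lt_of_le_of_lt hSB hsB
    have hs2 : 2 < s := lt_of_le_of_lt hS2 hsS
    have hst₁ : 2 * t₁ + 2 < s := lt_of_le_of_lt hS1 hsS
    have hsR : 4 * (R + 1) / ε < s := lt_of_le_of_lt hS3 hsS
    have hεs : R + 1 ≤ ε * s / 4 := by
      rw [div_lt_iff₀ hε0] at hsR
      linarith only [hsR]
    -- s ≤ t
    have e : dist (c t) o = t := by rw [dist_comm]; exact hdc t ht0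
    rw [e] at hpyt0
    have hsle_t : s ≤ t := by
      nlinarith only [hpyt0, sq_nonneg (dist (c t) (proj (c t))), hs0, ht0,
        sq_nonneg (s - t), sq_nonneg (s + t)]
    have ht₁t : t₁ ≤ t := by linarith only [hst₁, hsle_t, ht₁0]
    have ht0' : 0 < t := by linarith only [hs2, hsle_t]
    set L := dist (c t) (b s) with hLdef
    have hLpe : dist (c t) (proj (c t)) = L := by rw [hpe, hLdef]
    have hL1 : ε * t / 2 ≤ L := by rw [hLdef]; exact hdiv t ht₁t s hs0
    have hLt : L ≤ t := by
      have h := (hproj (c t)).2 o homem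
      rw [hLpe, e] at h
      exact h
    have hLts : t - s ≤ L := by
      have h := dist_triangle o (b s) (c t)
      rw [hdb s hs0, dist_comm (b s) (c t), dist_comm o (c t), e, ← hLdef] at h
      linarith only [h]
    clear_value L
    have hL0 : 0 < L :=
      lt_of_lt_of_le (div_pos (mul_pos hε0 ht0') (by norm_num)) hL1
    have hLs0 : 0 < L + s := by linarith only [hL0, hs0]
    set θ := (1 - 1 / t) * L / (L + s) with hθdef
    have h1t : 1 / t ≤ 1 / 2 := by
      apply one_div_le_one_div_of_le
      · norm_num
      · linarith only [hs2, hsle_t]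
    have h1t0 : 0 ≤ 1 / t := le_of_lt (div_pos one_pos ht0')
    have hθ0 : 0 ≤ θ := by
      rw [hθdef]
      exact div_nonneg (mul_nonneg (by linarith only [h1t]) hL0.le) hLs0.le
    have hθ1 : θ ≤ 1 := by
      rw [hθdef, div_le_one hLs0]
      have h4 : 0 ≤ 1 / t * L := mul_nonneg h1t0 hL0.le
      nlinarith only [h4, hs0, hL0]
    have hsum' : θ * L + θ * s = L - L / t := by
      rw [hθdef]
      field_simp
    have hsum'' : θ * L * t + θ * s * t = L * t - L := by
      rw [hθdef]
      field_simp
    clear_value θ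
    -- the geodesic from c t to b s
    obtain ⟨γ, hγ⟩ := hGeo (c t) (b s)
    have hθmem : θ ∈ Set.Icc (0:ℝ) 1 := ⟨hθ0, hθ1⟩
    have hζp : dist (γ θ) (b s) = (1 - θ) * L := by
      have h := hγ.2.2 θ hθmem 1 ⟨zero_le_one, le_rfl⟩
      rw [hγ.2.1, abs_sub_comm, abs_of_nonneg (by linarith only [hθ1] : (0:ℝ) ≤ 1 - θ),
        ← hLdef] at h
      exact h
    have hζct : dist (c t) (γ θ) = θ * L := by
      have h := hγ.2.2 0 ⟨le_rfl, zero_le_one⟩ θ hθmem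
      rw [hγ.1, zero_sub, abs_neg, abs_of_nonneg hθ0, ← hLdef] at h
      exact h
    have hray : ∀ y ∈ rayImage b, (1 - θ) * L ≤ dist (γ θ) y := by
      intro y hy
      have h1 : L ≤ dist (c t) y := by
        have h := (hproj (c t)).2 y hy
        rw [hLpe] at h
        exact h
      have h2 : dist (c t) y ≤ dist (c t) (γ θ) + dist (γ θ) y := dist_triangle _ _ _
      rw [hζct] at h2
      linarith only [h1, h2]
    set ρ := θ * s + L / (2 * t) with hρdef
    have hLt2 : 0 < L / (2 * t) := div_pos hL0 (by linarith only [ht0'])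
    have hρ0 : 0 < ρ := by
      have h1 : 0 ≤ θ * s := mul_nonneg hθ0 hs0
      rw [hρdef]
      linarith only [h1, hLt2]
    have hρlt : ρ + L / (2 * t) ≤ (1 - θ) * L := by
      have h : (1 - θ) * L = L / t + θ * s := by
        linear_combination (-1 : ℝ) * hsum'
      have hhalf : L / t = 2 * (L / (2 * t)) := by ring
      rw [h, hρdef]
      linarith only [hhalf]
    clear_value ρ
    -- the ball is disjoint from the ray
    have hdisj : Metric.closedBall (γ θ) ρ ∩ rayImage b = ∅ := by
      rw [Set.eq_empty_iff_forall_notMem]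
      rintro y ⟨hy1, hy2⟩
      rw [Metric.mem_closedBall, dist_comm] at hy1
      have h := hray y hy2
      linarith only [hy1, h, hρlt, hLt2]
    have hdiam := hcon (γ θ) ρ hρ0 hdisj
    -- the image of the ball under proj is bounded
    have hsub : proj '' Metric.closedBall (γ θ) ρ ⊆
        Metric.closedBall o (2 * (dist o (γ θ) + ρ)) := by
      rintro x ⟨z, hz, rfl⟩
      rw [Metric.mem_closedBall] at hz ⊢
      have h1 : dist z (proj z) ≤ dist z o := (hproj z).2 o homem
      have h2 : dist z o ≤ dist z (γ θ) + dist (γ θ) o := dist_triangle _ _ _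
      have h3 : dist (proj z) o ≤ dist (proj z) z + dist z o := dist_triangle _ _ _
      rw [dist_comm (proj z) z] at h3
      rw [dist_comm (γ θ) o] at h2
      linarith only [h1, h2, h3, hz]
    have hbdd : Bornology.IsBounded (proj '' Metric.closedBall (γ θ) ρ) :=
      Metric.isBounded_closedBall.subset hsub
    -- the comparison point on c
    set v := t * (1 - θ) with hvdef
    have hv0 : 0 ≤ v := by
      rw [hvdef]
      exact mul_nonneg ht0 (by linarith only [hθ1])
    have hβ : IsGeodesicSegment (fun x => c (t * (1 - x))) (c t) o := by
      refine ⟨?_, ?_, ?_⟩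
      · show c (t * (1 - 0)) = c t
        norm_num
      · show c (t * (1 - 1)) = o
        rw [show t * (1 - 1) = 0 by ring, hco]
      intro x hx y hy
      rw [hc _ _ (mul_nonneg ht0 (by linarith only [hx.2]))
          (mul_nonneg ht0 (by linarith only [hy.2])),
        show t * (1 - x) - t * (1 - y) = t * (y - x) by ring, abs_mul,
        abs_of_nonneg ht0, abs_sub_comm y x, e]
      ring
    have hcomp : dist (γ θ) (c v) ≤ θ * s := by
      have h : dist (γ θ) (c (t * (1 - θ))) ≤ θ * dist (b s) o :=
        seg_comp ⟨hGeo, hCN⟩ hγ hβ hθ0 hθ1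
      rw [dist_comm (b s) o, hdb s hs0, ← hvdef] at h
      exact h
    have hveq : v * (L + s) = t * s + L := by
      rw [hvdef]
      linear_combination (-1 : ℝ) * hsum''
    clear_value v
    have hmem1 : proj (γ θ) ∈ proj '' Metric.closedBall (γ θ) ρ :=
      ⟨γ θ, Metric.mem_closedBall_self hρ0.le, rfl⟩
    have hmem2 : proj (c v) ∈ proj '' Metric.closedBall (γ θ) ρ := by
      refine ⟨c v, ?_, rfl⟩
      rw [Metric.mem_closedBall, dist_comm]
      have h4 : θ * s ≤ ρ := by
        rw [hρdef]
        linarith only [hLt2]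
      exact le_trans hcomp h4
    have hpζ : proj (γ θ) = b s := by
      apply punique (γ θ) s hs0
      intro y hy
      rw [hζp]
      exact hray y hy
    set σv := dist o (proj (c v)) with hσdef
    have hσv0 : 0 ≤ σv := by rw [hσdef]; exact dist_nonneg
    have hpv : proj (c v) = b σv := by rw [hσdef]; exact hprojeq (c v)
    have ht₁v' : t₁ ≤ v → σv ≤ α * v := by
      intro h
      rw [hσdef]
      exact hσle v h
    clear_value σv
    have hkey : dist (b s) (b σv) ≤ n * κ (dist o (γ θ)) := by
      have h := Metric.dist_le_diam_of_mem hbdd hmem1 hmem2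
      rw [hpζ, hpv] at h
      exact le_trans h hdiam
    have habs : dist (b s) (b σv) = |s - σv| := hb s σv hs0 hσv0
    -- bounds on W = dist o (γ θ)
    set W := dist o (γ θ) with hWdef
    have hWlow1 : (1 - θ) * L ≤ W := by
      rw [hWdef, dist_comm]
      exact hray o homem
    have hWtri : W ≤ dist o (b s) + dist (b s) (γ θ) := by
      rw [hWdef]
      exact dist_triangle _ _ _
    have hκWR : R ≤ W → κ W ≤ δ * W := hκlin W
    clear_value W
    rw [hdb s hs0, dist_comm (b s) (γ θ), hζp] at hWtri
    have hεL : ε * s ≤ 2 * L := by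
      have h := mul_le_mul_of_nonneg_left hsle_t hε0.le
      linarith only [h, hL1]
    have hεL2 : ε * L ≤ 2 * L := mul_le_mul_of_nonneg_right hε2 hL0.le
    have hsL : θ * L * L + θ * s * L = L * L - L / t * L := by
      linear_combination L * hsum'
    have hWlow2 : ε * s / 4 * (L + s) ≤ ((1 - θ) * L) * (L + s) := by
      have hp1 : ε * L * s ≤ 2 * L * s := mul_le_mul_of_nonneg_right hεL2 hs0
      have hp2 : ε * s * s ≤ 2 * L * s := mul_le_mul_of_nonneg_right hεL hs0
      have hp3 : 0 ≤ L / t * L := mul_nonneg (div_nonneg hL0.le ht0'.le) hL0.le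
      nlinarith only [hsL, hp1, hp2, hp3]
    have hWlow : ε * s / 4 ≤ W :=
      le_trans (le_of_mul_le_mul_right hWlow2 hLs0) hWlow1
    have hWhigh : W ≤ 2 * s + 1 := by
      have hLt1 : L / t ≤ 1 := (div_le_one ht0').2 hLt
      have h3 : θ * s ≤ 1 * s := mul_le_mul_of_nonneg_right hθ1 hs0
      have h2 : (1 - θ) * L ≤ s + 1 := by
        nlinarith only [hsum', hLt1, h3]
      linarith only [hWtri, h2]
    have hWR : R ≤ W := by linarith only [hεs, hWlow]
    have hκW : κ W ≤ δ * W := hκWR hWR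
    have hs1 : (1:ℝ) ≤ s := by linarith only [hs2]
    have hnκ : n * κ W ≤ 3 * n * δ * s := by
      have h1 : κ W ≤ δ * (2 * s + 1) :=
        le_trans hκW (mul_le_mul_of_nonneg_left hWhigh hδ0.le)
      have h2 : δ * (2 * s + 1) ≤ 3 * δ * s := by
        have h4 : 0 ≤ δ * (s - 1) := mul_nonneg hδ0.le (by linarith only [hs1])
        nlinarith only [h4]
      calc n * κ W ≤ n * (3 * δ * s) :=
            mul_le_mul_of_nonneg_left (le_trans h1 h2) hn0
        _ = 3 * n * δ * s := by ring
    -- bounds on v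
    have hv1 : v ≤ s + 1 := by
      have h3 : 0 ≤ s * (L + s + 1 - t) :=
        mul_nonneg hs0 (by linarith only [hLts])
      nlinarith only [hveq, h3, hLs0]
    have hv2 : s / 2 ≤ v := by
      have h3 : s * L ≤ s * t := mul_le_mul_of_nonneg_left hLt hs0
      have h4 : s * s ≤ s * t := mul_le_mul_of_nonneg_left hsle_t hs0
      nlinarith only [hveq, h3, h4, hL0, hLs0]
    have ht₁v : t₁ ≤ v := by linarith only [hv2, hst₁, ht₁0]
    have hσvle : σv ≤ α * v := ht₁v' ht₁v
    -- the final contradiction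
    have hfin1 : s - σv ≤ 3 * n * δ * s := by
      rw [habs] at hkey
      have h2 : s - σv ≤ |s - σv| := le_abs_self _
      linarith only [hkey, h2, hnκ]
    have hσvs : σv ≤ α * (s + 1) :=
      le_trans hσvle (mul_le_mul_of_nonneg_left hv1 hα0)
    have h3nδ : 3 * n * δ ≤ 3 * (1 - α) / 8 := by
      nlinarith only [hδle, hδ0.le]
    have h35 : 3 * n * δ * s ≤ 3 * (1 - α) / 8 * s :=
      mul_le_mul_of_nonneg_right h3nδ hs0
    have h5u : 8 ≤ s * (5 * (1 - α)) := by
      have h0 : (0:ℝ) < 5 * (1 - α) := by linarith only [hα1]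
      exact (div_le_iff₀ h0).mp (le_of_lt (lt_of_le_of_lt hBα hsB))
    linarith only [hfin1, hσvs, h35, h5u, hα1]
  -- conclude boundedness
  have hsubf : proj '' rayImage c ⊆ Metric.closedBall o B := by
    rintro x ⟨y, ⟨u, hu, rfl⟩, rfl⟩
    rw [Metric.mem_closedBall, dist_comm]
    exact main u hu
  exact Metric.isBounded_closedBall.subset hsubf
end

section
/- Let X be a proper complete CAT(0) space. Let c be a geodesic ray with the bounded geodesic image property, and let c' be a distinct geodesic ray with c(0) = c'(0). Then there is a constant n (depending only on c') such that for every x on c' and every y on c: d(x, x_c) + d(x_c, y) − n − 1 ≤ d(x, y) ≤ d(x, x_c) + d(x_c, y), where x_c is the nearest-point projection of x onto c. -/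
open Metric Set Filter

variable {X : Type*} [MetricSpace X]

/-- In a CAT(0) space, nearest-point projection onto (the image of) a geodesic ray
does not increase the distance to points of the ray. -/
lemma proj_dist_le_aux {X : Type*} [MetricSpace X]
    (hX : CAT0Space X) (c : ℝ → X) (hc : IsGeodesicRay c)
    (proj : X → X) (hproj : IsProjOnto proj (rayImage c))
    (z y : X) (hy : y ∈ rayImage c) :
    dist (proj z) y ≤ dist z y := by
  obtain ⟨a, ha0, hqa⟩ := (hproj z).1
  obtain ⟨t, ht0, hty⟩ := hy
  simp only [Set.mem_Ici] at ha0 ht0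
  set q := proj z with hq
  set γ : ℝ → X := fun u => c ((1 - u) * a + u * t) with hγ
  have hd : dist q y = |a - t| := by rw [← hqa, ← hty]; exact hc a t ha0 ht0
  have hseg : IsGeodesicSegment γ q y := by
    refine ⟨by simp [hγ, hqa], by simp [hγ, hty], ?_⟩
    intro s hs u hu
    have h1 : (0:ℝ) ≤ (1 - s) * a + s * t := by nlinarith [hs.1, hs.2, ha0, ht0]
    have h2 : (0:ℝ) ≤ (1 - u) * a + u * t := by nlinarith [hu.1, hu.2, ha0, ht0]
    simp only [hγ]
    rw [hc _ _ h1 h2, hd, ← abs_mul]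
    have he : (1 - s) * a + s * t - ((1 - u) * a + u * t) = -((s - u) * (a - t)) := by ring
    rw [he, abs_neg]
  have key : ∀ u ∈ Set.Ioc (0:ℝ) 1, (1 - u) * dist q y ^ 2 ≤ dist z y ^ 2 := by
    intro u hu
    have hmem : γ u ∈ rayImage c :=
      ⟨(1 - u) * a + u * t, Set.mem_Ici.mpr (by nlinarith [hu.1.le, hu.2, ha0, ht0]), rfl⟩
    have hmin : dist z q ≤ dist z (γ u) := (hproj z).2 _ hmem
    have hcn := hX.2 γ q y hseg z u ⟨hu.1.le, hu.2⟩
    have hsq : dist z q ^ 2 ≤ dist z (γ u) ^ 2 := by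
      nlinarith [dist_nonneg (x := z) (y := q)]
    have h8 := hsq.trans hcn
    have h9 : u * ((1 - u) * dist q y ^ 2) ≤ u * (dist z y ^ 2) := by
      nlinarith [mul_nonneg hu.1.le (sq_nonneg (dist z q))]
    exact le_of_mul_le_mul_left h9 hu.1
  have hAB : dist q y ^ 2 ≤ dist z y ^ 2 := by
    by_contra h
    push_neg at h
    set A := dist q y ^ 2 with hA'
    set B := dist z y ^ 2 with hB'
    have hB : (0:ℝ) ≤ B := by positivity
    have hA : (0:ℝ) < A := lt_of_le_of_lt hB h
    have humem : (A - B) / (2 * A) ∈ Set.Ioc (0:ℝ) 1 := by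
      constructor
      · apply div_pos (by linarith) (by linarith)
      · rw [div_le_one (by linarith)]; linarith
    have h1 := key _ humem
    have h2 : (1 - (A - B) / (2 * A)) * A = (A + B) / 2 := by
      field_simp
      ring
    rw [h2] at h1
    linarith
  nlinarith [dist_nonneg (x := q) (y := y), dist_nonneg (x := z) (y := y)]

/-- almost-additivity of distances through the projection point,
for rays with the bounded geodesic image property. -/
theorem dist_almost_additive_through_projection
    {X : Type*} [MetricSpace X] [ProperSpace X] [CompleteSpace X]
    (hX : CAT0Space X) (o : X)
    (c : ℝ → X) (hc : IsGeodesicRay c) (hco : c 0 = o)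
    (c' : ℝ → X) (hc' : IsGeodesicRay c') (hc'o : c' 0 = o)
    (hdist : ∃ t : ℝ, 0 ≤ t ∧ c t ≠ c' t)
    (proj : X → X) (hproj : IsProjOnto proj (rayImage c))
    (hbgi : BGIP c proj) :
    ∃ n : ℝ, 0 ≤ n ∧ ∀ s : ℝ, 0 ≤ s → ∀ t : ℝ, 0 ≤ t →
      dist (c' s) (proj (c' s)) + dist (proj (c' s)) (c t) - n - 1
          ≤ dist (c' s) (c t) ∧
      dist (c' s) (c t) ≤ dist (c' s) (proj (c' s)) + dist (proj (c' s)) (c t) := by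
  have hc'c : c' 0 = c 0 := hc'o.trans hco.symm
  obtain ⟨n, hn0, hn⟩ := hbgi c' hc' hc'c
  refine ⟨n, hn0, ?_⟩
  intro s hs t ht
  set x := c' s with hx
  set p := proj x with hp
  set y := c t with hy
  have hymem : y ∈ rayImage c := ⟨t, ht, rfl⟩
  clear_value x p y
  have hpx : dist x p ≤ dist x y := by rw [hp]; exact (hproj x).2 y hymem
  refine ⟨?_, ?_⟩
  · -- lower bound
    by_cases hcase : 2 * dist x p ≤ n + 1
    · have h1 : dist p y ≤ dist p x + dist x y := dist_triangle _ _ _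
      rw [dist_comm p x] at h1
      linarith
    · push_neg at hcase
      set d := dist x p with hd
      set r := d - 1/2 with hr
      clear_value d r
      have hd2 : (1:ℝ)/2 < d := by linarith
      have hr0 : 0 < r := by rw [hr]; linarith
      have hdisj : Metric.closedBall x r ∩ rayImage c = ∅ := by
        ext w
        simp only [Set.mem_inter_iff, Metric.mem_closedBall, Set.mem_empty_iff_false,
          iff_false, not_and]
        intro hw1 hw2
        have h2 := (hproj x).2 w hw2
        rw [dist_comm] at hw1
        rw [← hp, ← hd] at h2
        linarith
      have hdiam := hn s r hs (by rw [← hx]; exact hdisj)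
      rw [← hx] at hdiam
      obtain ⟨γ, hγ⟩ := hX.1 x y
      set D := dist x y with hD
      clear_value D
      have hDpos : 0 < D := lt_of_lt_of_le (by linarith) hpx
      set u := r / D with hu'
      clear_value u
      have huIcc : u ∈ Set.Icc (0:ℝ) 1 := by
        constructor
        · rw [hu']; positivity
        · rw [hu', div_le_one hDpos]; linarith
      set z := γ u with hz
      clear_value z
      have huD : u * D = r := by
        rw [hu', div_mul_cancel₀ _ (ne_of_gt hDpos)]
      have hxz : dist x z = r := by
        have h3 := hγ.2.2 0 ⟨le_refl 0, zero_le_one⟩ u huIcc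
        rw [hγ.1, ← hD] at h3
        rw [hz, h3, abs_of_nonpos (by linarith [huIcc.1] : (0:ℝ) - u ≤ 0)]
        rw [show -((0:ℝ) - u) * D = u * D by ring, huD]
      have hzy : dist z y = D - r := by
        have h3 := hγ.2.2 u huIcc 1 ⟨zero_le_one, le_refl 1⟩
        rw [hγ.2.1, ← hD] at h3
        rw [hz, h3, abs_of_nonpos (by linarith [huIcc.2] : u - 1 ≤ 0)]
        rw [show -(u - 1) * D = D - u * D by ring, huD]
      have hzball : z ∈ Metric.closedBall x r := by
        rw [Metric.mem_closedBall, dist_comm]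
        exact hxz.le
      have hxball : x ∈ Metric.closedBall x r := Metric.mem_closedBall_self hr0.le
      have hbdd : Bornology.IsBounded (proj '' Metric.closedBall x r) := by
        apply (Metric.isBounded_closedBall (x := p) (r := 2 * d + 2 * r)).subset
        rintro _ ⟨w, hw, rfl⟩
        rw [Metric.mem_closedBall] at hw ⊢
        have hpmem : p ∈ rayImage c := by rw [hp]; exact (hproj x).1
        have h4 : dist w (proj w) ≤ dist w p := (hproj w).2 p hpmem
        have h5 : dist w p ≤ dist w x + dist x p := dist_triangle _ _ _
        have h6 : dist (proj w) p ≤ dist (proj w) w + dist w x + dist x p :=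
          dist_triangle4 _ _ _ _
        rw [dist_comm (proj w) w] at h6
        rw [← hd] at h5 h6
        linarith
      have hqp : dist (proj z) p ≤ n := by
        have h7 := Metric.dist_le_diam_of_mem hbdd ⟨z, hzball, rfl⟩ ⟨x, hxball, rfl⟩
        rw [← hp] at h7
        exact h7.trans hdiam
      have hqy : dist (proj z) y ≤ dist z y :=
        proj_dist_le_aux hX c hc proj hproj z y hymem
      have h1 : dist p y ≤ dist p (proj z) + dist (proj z) y := dist_triangle _ _ _
      rw [dist_comm p (proj z)] at h1
      rw [hzy] at hqy
      linarith
  · calc dist x y ≤ dist x p + dist p y := dist_triangle _ _ _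
end

section
/- Let X be a proper complete CAT(0) space and let c, c' be two distinct geodesic rays starting at the same point o, where c has the bounded geodesic image property. Then the Busemann function b_c of c satisfies b_c(c'(s)) → ∞ as s → ∞, and the Busemann function b_{c'} of c' satisfies b_{c'}(c(t)) → ∞ as t → ∞. -/
open Metric Set Filter

variable {X : Type*} [MetricSpace X]

/-- auxiliary: segment along a geodesic ray -/
lemma ray_segment_s6 {g : ℝ → X} (hg : IsGeodesicRay g)
    (a b : ℝ) (ha : 0 ≤ a) (hb : 0 ≤ b) :
    IsGeodesicSegment (fun u => g (a + u * (b - a))) (g a) (g b) := by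
  refine ⟨?_, ?_, ?_⟩
  · show g (a + (0:ℝ) * (b - a)) = g a
    rw [show a + (0:ℝ) * (b - a) = a by ring]
  · show g (a + (1:ℝ) * (b - a)) = g b
    rw [show a + (1:ℝ) * (b - a) = b by ring]
  · intro s hs t ht
    show dist (g (a + s * (b - a))) (g (a + t * (b - a))) = _
    have h1 : 0 ≤ a + s * (b - a) := by nlinarith [hs.1, hs.2]
    have h2 : 0 ≤ a + t * (b - a) := by nlinarith [ht.1, ht.2]
    rw [hg _ _ h1 h2, hg a b ha hb,
      show a + s * (b - a) - (a + t * (b - a)) = (s - t) * (b - a) by ring, abs_mul,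
      abs_sub_comm b a]


set_option maxHeartbeats 1000000 in
/-- Busemann functions diverge along non-asymptotic rays, given
the bounded geodesic image property. -/
theorem busemann_diverges_of_bgip
    {X : Type*} [MetricSpace X] [ProperSpace X] [CompleteSpace X]
    (hX : CAT0Space X) (o : X)
    (c : ℝ → X) (hc : IsGeodesicRay c) (hco : c 0 = o)
    (c' : ℝ → X) (hc' : IsGeodesicRay c') (hc'o : c' 0 = o)
    (hdist : ∃ t : ℝ, 0 ≤ t ∧ c t ≠ c' t)
    (proj : X → X) (hproj : IsProjOnto proj (rayImage c))
    (hbgi : BGIP c proj) :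
    Tendsto (fun s => busemann c (c' s)) atTop atTop ∧
    Tendsto (fun t => busemann c' (c t)) atTop atTop := by
  obtain ⟨hgeo, hCN⟩ := hX
  obtain ⟨n, hn0, hball⟩ := hbgi c' hc' (hc'o.trans hco.symm)
  set N := max n 1 with hNdef
  have hN1 : (1:ℝ) ≤ N := le_max_right _ _
  have hnN : n ≤ N := le_max_left _ _
  have hN0 : (0:ℝ) ≤ N := by linarith
  have homem : o ∈ rayImage c := ⟨0, Set.self_mem_Ici, hco⟩
  have hnear : ∀ (x : X) (a : ℝ), 0 ≤ a → dist x (proj x) ≤ dist x (c a) :=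
    fun x a ha => (hproj x).2 (c a) ⟨a, ha, rfl⟩
  have hnear_o : ∀ x : X, dist x (proj x) ≤ dist x o := fun x => (hproj x).2 o homem
  have hmem : ∀ x : X, ∃ a : ℝ, 0 ≤ a ∧ c a = proj x := by
    intro x
    obtain ⟨a, ha, hae⟩ := (hproj x).1
    exact ⟨a, ha, hae⟩
  choose τ hτ0 hτc using hmem
  have hdc : ∀ a b : ℝ, 0 ≤ a → 0 ≤ b → dist (c a) (c b) = |a - b| := hc
  -- boundedness of projected balls
  have hbdd : ∀ (z : X) (r : ℝ), Bornology.IsBounded (proj '' Metric.closedBall z r) := by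
    intro z r
    apply (Metric.isBounded_closedBall (x := o) (r := 2 * (dist z o + |r|))).subset
    rintro w ⟨y, hy, rfl⟩
    rw [Metric.mem_closedBall] at hy ⊢
    have h1 : dist y (proj y) ≤ dist y o := hnear_o y
    have h2 : dist (proj y) o ≤ dist (proj y) y + dist y o := dist_triangle _ _ _
    have h3 : dist (proj y) y = dist y (proj y) := dist_comm _ _
    have h4 : dist y o ≤ dist y z + dist z o := dist_triangle _ _ _
    have h5 : dist y z ≤ |r| := le_trans hy (le_abs_self r)
    linarith
  -- shadow lemma
  have hshadow : ∀ (s ρ : ℝ) (x : X), 0 ≤ s → 0 ≤ ρ → ρ < dist (c' s) (proj (c' s)) →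
      dist x (c' s) ≤ ρ → dist (proj x) (proj (c' s)) ≤ N := by
    intro s ρ x hs hρ0 hρlt hx
    have hdisj : Metric.closedBall (c' s) ρ ∩ rayImage c = ∅ := by
      rw [Set.eq_empty_iff_forall_notMem]
      rintro y ⟨hy1, a, ha, rfl⟩
      have h2 : dist (c' s) (proj (c' s)) ≤ dist (c' s) (c a) := hnear _ a ha
      rw [Metric.mem_closedBall, dist_comm] at hy1
      linarith
    have hdiam := hball s ρ hs hdisj
    have hb : Bornology.IsBounded (proj '' Metric.closedBall (c' s) ρ) := hbdd _ _
    have h1 : proj x ∈ proj '' Metric.closedBall (c' s) ρ :=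
      ⟨x, Metric.mem_closedBall.mpr hx, rfl⟩
    have h2 : proj (c' s) ∈ proj '' Metric.closedBall (c' s) ρ :=
      ⟨c' s, Metric.mem_closedBall.mpr (by simpa using hρ0), rfl⟩
    exact le_trans (le_trans (Metric.dist_le_diam_of_mem hb h1 h2) hdiam) hnN
  -- obtuse-angle corollary
  have hobtuse : ∀ (x : X) (b : ℝ), 0 ≤ b → dist (proj x) (c b) ≤ dist x (c b) := by
    intro x b hb
    have hseg := ray_segment_s6 hc (τ x) b (hτ0 x) hb
    have key : ∀ u : ℝ, 0 < u → u ≤ 1 →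
        (1 - u) * dist (proj x) (c b) ^ 2 ≤ dist x (c b) ^ 2 := by
      intro u hu0 hu1
      have hCNu := hCN _ _ _ hseg x u ⟨hu0.le, hu1⟩
      beta_reduce at hCNu
      have hparam : 0 ≤ τ x + u * (b - τ x) := by nlinarith [hτ0 x]
      have hmin : dist x (proj x) ≤ dist x (c (τ x + u * (b - τ x))) := hnear x _ hparam
      have hsqmin : dist x (proj x) ^ 2 ≤ dist x (c (τ x + u * (b - τ x))) ^ 2 :=
        pow_le_pow_left₀ dist_nonneg hmin 2
      rw [hτc x] at hCNu
      nlinarith [hCNu, hsqmin, hu0, mul_nonneg hu0.le (sq_nonneg (dist x (proj x)))]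
    have hq2p2 : dist (proj x) (c b) ^ 2 ≤ dist x (c b) ^ 2 := by
      by_contra hcon
      push_neg at hcon
      have hq2pos : 0 < dist (proj x) (c b) ^ 2 := lt_of_le_of_lt (sq_nonneg _) hcon
      set u := (dist (proj x) (c b) ^ 2 - dist x (c b) ^ 2) / (2 * dist (proj x) (c b) ^ 2) with hu
      have hu0 : 0 < u := div_pos (by linarith) (by linarith)
      have hu1 : u ≤ 1 := by
        rw [hu, div_le_one (by linarith)]
        nlinarith [sq_nonneg (dist x (c b))]
      have hk := key u hu0 hu1
      have he : (1 - u) * dist (proj x) (c b) ^ 2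
          = dist (proj x) (c b) ^ 2 - (dist (proj x) (c b) ^ 2 - dist x (c b) ^ 2) / 2 := by
        rw [hu, sub_mul, one_mul, div_mul_eq_mul_div, mul_div_mul_right _ _ hq2pos.ne']
      rw [he] at hk
      linarith
    nlinarith [hq2p2, dist_nonneg (x := proj x) (y := c b), dist_nonneg (x := x) (y := c b)]
  -- Key estimate (C)
  have hC : ∀ s t : ℝ, 0 ≤ s → 0 ≤ t →
      dist (c' s) (proj (c' s)) + |t - τ (c' s)| - N ≤ dist (c' s) (c t) := by
    intro s t hs ht
    have hds0 : 0 ≤ dist (c' s) (proj (c' s)) := dist_nonneg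
    have hDge : dist (c' s) (proj (c' s)) ≤ dist (c' s) (c t) := hnear _ t ht
    have hτcs : c (τ (c' s)) = proj (c' s) := hτc _
    refine le_of_forall_pos_le_add fun ε hε => ?_
    by_cases hcase : dist (c' s) (proj (c' s)) ≤ ε / 2
    · have h1 : dist (proj (c' s)) (c t) ≤ dist (proj (c' s)) (c' s) + dist (c' s) (c t) :=
        dist_triangle _ _ _
      have h2 : dist (proj (c' s)) (c t) = |τ (c' s) - t| := by
        rw [← hτcs, hdc _ _ (hτ0 _) ht]
      have h3 : dist (proj (c' s)) (c' s) = dist (c' s) (proj (c' s)) := dist_comm _ _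
      have h4 : |t - τ (c' s)| = |τ (c' s) - t| := abs_sub_comm _ _
      rw [h2, h3] at h1
      linarith
    · push_neg at hcase
      have hdspos : 0 < dist (c' s) (proj (c' s)) := lt_trans (half_pos hε) hcase
      have hρ0 : 0 ≤ dist (c' s) (proj (c' s)) - ε / 2 := by linarith
      have hρlt : dist (c' s) (proj (c' s)) - ε / 2 < dist (c' s) (proj (c' s)) := by linarith
      obtain ⟨γ, hγ0, hγ1, hγd⟩ := hgeo (c' s) (c t)
      have hDpos : 0 < dist (c' s) (c t) := lt_of_lt_of_le hdspos hDge
      set ρ := dist (c' s) (proj (c' s)) - ε / 2 with hρdef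
      set θ := ρ / dist (c' s) (c t) with hθdef
      have hθ0 : 0 ≤ θ := div_nonneg hρ0 hDpos.le
      have hθ1 : θ ≤ 1 := by
        rw [hθdef, div_le_one hDpos]
        linarith
      have hγθ0 : dist (γ θ) (c' s) = ρ := by
        have h := hγd θ ⟨hθ0, hθ1⟩ 0 ⟨le_refl 0, zero_le_one⟩
        rw [hγ0] at h
        rw [h, sub_zero, abs_of_nonneg hθ0, hθdef]
        field_simp
      have hγθ1 : dist (γ θ) (c t) = dist (c' s) (c t) - ρ := by
        have h := hγd θ ⟨hθ0, hθ1⟩ 1 ⟨zero_le_one, le_refl 1⟩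
        rw [hγ1] at h
        rw [h, abs_of_nonpos (by linarith : θ - 1 ≤ 0), hθdef]
        field_simp
        ring
      have hsh := hshadow s ρ (γ θ) hs hρ0 hρlt (le_of_eq hγθ0)
      have hτγ : dist (proj (γ θ)) (proj (c' s)) = |τ (γ θ) - τ (c' s)| := by
        rw [← hτc (γ θ), ← hτcs, hdc _ _ (hτ0 _) (hτ0 _)]
      rw [hτγ] at hsh
      have hob := hobtuse (γ θ) t ht
      have hdx : dist (proj (γ θ)) (c t) = |τ (γ θ) - t| := by
        rw [← hτc (γ θ), hdc _ _ (hτ0 _) ht]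
      rw [hdx, hγθ1] at hob
      have htri : |t - τ (c' s)| ≤ |τ (γ θ) - t| + |τ (γ θ) - τ (c' s)| := by
        have h := abs_sub_abs_le_abs_sub (t - τ (γ θ)) 0
        calc |t - τ (c' s)| = |(t - τ (γ θ)) + (τ (γ θ) - τ (c' s))| := by ring_nf
          _ ≤ |t - τ (γ θ)| + |τ (γ θ) - τ (c' s)| := abs_add_le _ _
          _ = |τ (γ θ) - t| + |τ (γ θ) - τ (c' s)| := by rw [abs_sub_comm t]
      clear_value θ ρ
      linarith [htri, hob, hsh, hρdef, hε]
  -- slope lemma: convexity from o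
  have hslope : ∀ (b θ : ℝ), 0 ≤ b → 0 ≤ θ → θ ≤ 1 →
      dist (c (θ * b)) (c' (θ * b)) ≤ θ * dist (c b) (c' b) := by
    intro b θ hb hθ0 hθ1
    have hsegC := ray_segment_s6 hc 0 b le_rfl hb
    have hsegC' := ray_segment_s6 hc' 0 b le_rfl hb
    have h1 := hCN _ _ _ hsegC' (c (θ * b)) θ ⟨hθ0, hθ1⟩
    have h2 := hCN _ _ _ hsegC (c' b) θ ⟨hθ0, hθ1⟩
    beta_reduce at h1 h2
    rw [show (0:ℝ) + θ * (b - 0) = θ * b by ring] at h1 h2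
    have e1 : dist (c (θ * b)) (c' 0) = θ * b := by
      rw [hc'o, ← hco, hdc _ _ (by positivity) le_rfl, sub_zero,
        abs_of_nonneg (by positivity)]
    have e2 : dist (c' 0) (c' b) = b := by
      rw [hc' 0 b le_rfl hb, zero_sub, abs_neg, abs_of_nonneg hb]
    have e3 : dist (c' b) (c 0) = b := by
      rw [hco, ← hc'o, dist_comm, hc' 0 b le_rfl hb, zero_sub, abs_neg, abs_of_nonneg hb]
    have e4 : dist (c' b) (c b) = dist (c b) (c' b) := dist_comm _ _
    have e5 : dist (c 0) (c b) = b := by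
      rw [hdc 0 b le_rfl hb, zero_sub, abs_neg, abs_of_nonneg hb]
    rw [e1, e2] at h1
    rw [e3, e4, e5] at h2
    have e6 : dist (c' b) (c (θ * b)) = dist (c (θ * b)) (c' b) := dist_comm _ _
    rw [e6] at h2
    have hsq : dist (c (θ * b)) (c' (θ * b)) ^ 2 ≤ (θ * dist (c b) (c' b)) ^ 2 := by
      have h9 := mul_le_mul_of_nonneg_left h2 hθ0
      nlinarith [h1, h9, sq_nonneg θ, sq_nonneg b]
    nlinarith [hsq, dist_nonneg (x := c (θ * b)) (y := c' (θ * b)),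
      mul_nonneg hθ0 (dist_nonneg (x := c b) (y := c' b))]
  -- the two rays diverge linearly
  obtain ⟨r₁, hr₁0, hne⟩ := hdist
  have hr₁pos : 0 < r₁ := by
    rcases lt_or_eq_of_le hr₁0 with h | h
    · exact h
    · exfalso; apply hne; rw [← h, hco, hc'o]
  have hδ₁pos : 0 < dist (c r₁) (c' r₁) := dist_pos.mpr hne
  set α := dist (c r₁) (c' r₁) / r₁ with hαdef
  have hαpos : 0 < α := div_pos hδ₁pos hr₁pos
  have hα2 : α ≤ 2 := by
    rw [hαdef, div_le_iff₀ hr₁pos]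
    have h1 : dist (c r₁) (c' r₁) ≤ dist (c r₁) o + dist o (c' r₁) := dist_triangle _ _ _
    have h2 : dist (c r₁) o = r₁ := by
      rw [← hco, hdc _ _ hr₁0 le_rfl, sub_zero, abs_of_nonneg hr₁0]
    have h3 : dist o (c' r₁) = r₁ := by
      rw [← hc'o, hc' 0 r₁ le_rfl hr₁0, zero_sub, abs_neg, abs_of_nonneg hr₁0]
    linarith
  have hgrow : ∀ u : ℝ, r₁ ≤ u → α * u ≤ dist (c u) (c' u) := by
    intro u hu
    have hu0 : 0 < u := lt_of_lt_of_le hr₁pos hu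
    have hθ1 : r₁ / u ≤ 1 := by rw [div_le_one hu0]; exact hu
    have hθ0 : 0 ≤ r₁ / u := by positivity
    have h := hslope u (r₁ / u) hu0.le hθ0 hθ1
    rw [show r₁ / u * u = r₁ by field_simp] at h
    rw [hαdef, div_mul_eq_mul_div, div_le_iff₀ hr₁pos]
    have h2 : dist (c r₁) (c' r₁) * u ≤ r₁ / u * dist (c u) (c' u) * u :=
      mul_le_mul_of_nonneg_right h hu0.le
    have h3 : r₁ / u * dist (c u) (c' u) * u = dist (c u) (c' u) * r₁ := by
      field_simp
    linarith
  -- |τ_s - s| ≤ d_s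
  have hτs : ∀ s : ℝ, 0 ≤ s → |τ (c' s) - s| ≤ dist (c' s) (proj (c' s)) := by
    intro s hs
    have h1 : dist (c (τ (c' s))) o = τ (c' s) := by
      rw [← hco, hdc _ _ (hτ0 _) le_rfl, sub_zero, abs_of_nonneg (hτ0 _)]
    have h2 : dist (c' s) o = s := by
      rw [← hc'o, hc' s 0 hs le_rfl, sub_zero, abs_of_nonneg hs]
    have h3 := abs_dist_sub_le (c (τ (c' s))) (c' s) o
    rw [h1, h2, hτc (c' s), dist_comm (proj (c' s)) (c' s)] at h3
    exact h3
  have hδ2d : ∀ s : ℝ, 0 ≤ s → dist (c s) (c' s) ≤ 2 * dist (c' s) (proj (c' s)) := by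
    intro s hs
    have h1 : dist (c s) (c' s) ≤ dist (c s) (c (τ (c' s))) + dist (c (τ (c' s))) (c' s) :=
      dist_triangle _ _ _
    have h2 : dist (c s) (c (τ (c' s))) = |s - τ (c' s)| := hdc _ _ hs (hτ0 _)
    have h3 : dist (c (τ (c' s))) (c' s) = dist (c' s) (proj (c' s)) := by
      rw [hτc, dist_comm]
    have h4 := hτs s hs
    have h5 : |s - τ (c' s)| = |τ (c' s) - s| := abs_sub_comm _ _
    rw [h2, h3, h5] at h1
    linarith
  -- upper bound on projection parameter from (C) at t = 0
  have hτub : ∀ s : ℝ, 0 ≤ s → τ (c' s) ≤ s - dist (c' s) (proj (c' s)) + N := by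
    intro s hs
    have h1 := hC s 0 hs le_rfl
    have h2 : dist (c' s) (c 0) = s := by
      rw [hco, ← hc'o, hc' s 0 hs le_rfl, sub_zero, abs_of_nonneg hs]
    have h3 : |(0:ℝ) - τ (c' s)| = τ (c' s) := by
      rw [zero_sub, abs_neg, abs_of_nonneg (hτ0 _)]
    rw [h2, h3] at h1
    linarith
  -- boundedness of projection parameters
  have hT : ∀ u : ℝ, 0 ≤ u → τ (c' u) ≤ r₁ + N + 2 * N / α + 4 * N / α ^ 2 := by
    intro u hu
    have hL0 := hτ0 (c' u)
    have hdu0 : (0:ℝ) ≤ dist (c' u) (proj (c' u)) := dist_nonneg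
    have h1 := hτub u hu
    have hpos1 : (0:ℝ) ≤ 2 * N / α := by positivity
    have hpos2 : (0:ℝ) ≤ 4 * N / α ^ 2 := by positivity
    by_cases hur : u < r₁
    · linarith
    · push_neg at hur
      have hαu : α * u ≤ 2 * dist (c' u) (proj (c' u)) :=
        le_trans (hgrow u hur) (hδ2d u hu)
      by_cases hLu : u < τ (c' u)
      · have hduN : dist (c' u) (proj (c' u)) ≤ N := by linarith
        have hu2N : u ≤ 2 * N / α := by
          rw [le_div_iff₀ hαpos]
          have : α * u ≤ 2 * N := by linarith
          linarith [this, mul_comm u α]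
        linarith
      · push_neg at hLu
        by_cases hLr : τ (c' u) < r₁
        · linarith
        · push_neg at hLr
          have hu0 : 0 < u := lt_of_lt_of_le hr₁pos hur
          have hseg := ray_segment_s6 hc' 0 u le_rfl hu
          have hθ0 : 0 ≤ τ (c' u) / u := by positivity
          have hθ1 : τ (c' u) / u ≤ 1 := by rw [div_le_one hu0]; exact hLu
          have hCN2 := hCN _ _ _ hseg (c (τ (c' u))) (τ (c' u) / u) ⟨hθ0, hθ1⟩
          beta_reduce at hCN2
          rw [show (0:ℝ) + τ (c' u) / u * (u - 0) = τ (c' u) by (field_simp; ring)] at hCN2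
          have e1 : dist (c (τ (c' u))) (c' 0) = τ (c' u) := by
            rw [hc'o, ← hco, hdc _ _ (hτ0 _) le_rfl, sub_zero, abs_of_nonneg (hτ0 _)]
          have e2 : dist (c (τ (c' u))) (c' u) = dist (c' u) (proj (c' u)) := by
            rw [hτc, dist_comm]
          have e3 : dist (c' 0) (c' u) = u := by
            rw [hc' 0 u le_rfl hu, zero_sub, abs_neg, abs_of_nonneg hu]
          rw [e1, e2, e3] at hCN2
          have hgrowτ := hgrow (τ (c' u)) hLr
          have hduB : dist (c' u) (proj (c' u)) ≤ u - τ (c' u) + N := by linarith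
          -- introduce θ as an opaque variable
          obtain ⟨θ, hθdef⟩ : ∃ θ : ℝ, θ = τ (c' u) / u := ⟨_, rfl⟩
          rw [← hθdef] at hCN2 hθ0 hθ1
          have hτθ : τ (c' u) = θ * u := by rw [hθdef]; field_simp
          rw [hτθ] at hCN2 hduB hgrowτ
          have hd9 : dist (c' u) (proj (c' u)) ≤ (1 - θ) * u + N := by
            have : (1 - θ) * u = u - θ * u := by ring
            linarith [hduB, this]
          have hdusq := pow_le_pow_left₀ hdu0 hd9 2
          have h7 := mul_le_mul_of_nonneg_left hdusq hθ0
          have hc1 : (0:ℝ) ≤ 2 * θ ^ 2 * u * N :=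
            mul_nonneg (mul_nonneg (by positivity) hu0.le) hN0
          have hc2 : (0:ℝ) ≤ (1 - θ) * N ^ 2 :=
            mul_nonneg (by linarith) (sq_nonneg N)
          have hsq' : dist (c (θ * u)) (c' (θ * u)) ^ 2 ≤ 2 * N * (θ * u) + N ^ 2 := by
            linarith [hCN2, h7, hc1, hc2]
          have hkey : (α * τ (c' u)) ^ 2 ≤ 2 * N * τ (c' u) + N ^ 2 := by
            rw [hτθ]
            have h8 : (α * (θ * u)) ^ 2 ≤ dist (c (θ * u)) (c' (θ * u)) ^ 2 :=
              pow_le_pow_left₀ (mul_nonneg hαpos.le (mul_nonneg hθ0 hu0.le)) hgrowτ 2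
            linarith [hsq', h8]
          by_contra hcon
          push_neg at hcon
          have hτpos : 0 < τ (c' u) := lt_of_lt_of_le hr₁pos hLr
          have h4 : 4 * N / α ^ 2 < τ (c' u) := by linarith
          have h5 : 4 * N < τ (c' u) * α ^ 2 := (div_lt_iff₀ (by positivity)).mp h4
          have h6 : 4 * N * τ (c' u) < τ (c' u) * α ^ 2 * τ (c' u) :=
            mul_lt_mul_of_pos_right h5 hτpos
          have h7 : 2 * N * τ (c' u) < N ^ 2 := by linarith [hkey, h6]
          have h4a : α ^ 2 ≤ 4 := by nlinarith [hα2, hαpos]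
          have hge : N ≤ 4 * N / α ^ 2 := by
            rw [le_div_iff₀ (by positivity)]
            have := mul_le_mul_of_nonneg_left h4a hN0
            linarith [this]
          have hτN : N < τ (c' u) := by linarith
          have h9 : N * N < N * (2 * τ (c' u) - N) :=
            mul_lt_mul_of_pos_left (by linarith) (by linarith)
          linarith [h7, h9, sq_nonneg N, hN1]
  -- conclusion
  haveI : Nonempty (Set.Ici (0:ℝ)) := ⟨⟨0, Set.self_mem_Ici⟩⟩
  constructor
  · have htd : Tendsto (fun s : ℝ => α / 2 * s + -(r₁ + N + 2 * N / α + 4 * N / α ^ 2 + N))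
        atTop atTop :=
      tendsto_atTop_add_const_right atTop _
        (Tendsto.const_mul_atTop (by positivity) tendsto_id)
    apply tendsto_atTop_mono' atTop ?_ htd
    filter_upwards [eventually_ge_atTop r₁] with s hs
    have hs0 : 0 ≤ s := le_trans hr₁pos.le hs
    have hds : α * s ≤ 2 * dist (c' s) (proj (c' s)) :=
      le_trans (hgrow s hs) (hδ2d s hs0)
    have hτT := hT s hs0
    refine le_ciInf ?_
    rintro ⟨t, ht⟩
    show α / 2 * s + -(r₁ + N + 2 * N / α + 4 * N / α ^ 2 + N) ≤ dist (c' s) (c t) - t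
    have h1 := hC s t hs0 ht
    have h2 : t - τ (c' s) ≤ |t - τ (c' s)| := le_abs_self _
    have h3 : 0 ≤ τ (c' s) := hτ0 _
    linarith
  · have htd : Tendsto (fun t : ℝ => t + -(2 * (r₁ + N + 2 * N / α + 4 * N / α ^ 2) + N))
        atTop atTop := tendsto_atTop_add_const_right atTop _ tendsto_id
    apply tendsto_atTop_mono' atTop ?_ htd
    filter_upwards [eventually_ge_atTop 0] with t ht
    refine le_ciInf ?_
    rintro ⟨s, hs⟩
    show t + -(2 * (r₁ + N + 2 * N / α + 4 * N / α ^ 2) + N) ≤ dist (c t) (c' s) - s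
    have h1 := hC s t hs ht
    have h2 := hτs s hs
    have h3 := hT s hs
    have h4 : t - τ (c' s) ≤ |t - τ (c' s)| := le_abs_self _
    have h5 : s - τ (c' s) ≤ |τ (c' s) - s| := by
      rw [abs_sub_comm]; exact le_abs_self _
    have hcomm : dist (c t) (c' s) = dist (c' s) (c t) := dist_comm _ _
    linarith
end

section
/- Let X be a proper complete CAT(0) space, c and c' distinct geodesic rays starting at o, with c having the bounded geodesic image property, and h, h' horofunctions associated to c, c' respectively. Then for any k, k' ∈ ℝ, the intersection of the horoballs B = h^{-1}((−∞, −k]) and B' = (h')^{-1}((−∞, −k']) is a bounded subset of X. -/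
open Metric Set Filter

variable {X : Type*} [MetricSpace X]

section Part1

variable {X : Type*} [MetricSpace X]

lemma ray_dist_zero {c : ℝ → X} (hc : IsGeodesicRay c) {t : ℝ} (ht : 0 ≤ t) :
    dist (c 0) (c t) = t := by
  rw [hc 0 t le_rfl ht]; rw [abs_of_nonpos (by linarith)]; ring

lemma busemann_bddBelow {c : ℝ → X} (hc : IsGeodesicRay c) (x : X) :
    BddBelow (Set.range fun t : Set.Ici (0:ℝ) => dist x (c (t : ℝ)) - (t : ℝ)) := by
  refine ⟨-dist (c 0) x, ?_⟩
  rintro y ⟨⟨s, hs⟩, rfl⟩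
  simp only
  have h1 : dist (c 0) (c s) = s := ray_dist_zero hc hs
  have h2 : dist (c 0) (c s) ≤ dist (c 0) x + dist x (c s) := dist_triangle _ _ _
  linarith

lemma busemann_le {c : ℝ → X} (hc : IsGeodesicRay c) (x : X) {t : ℝ} (ht : 0 ≤ t) :
    busemann c x ≤ dist x (c t) - t :=
  ciInf_le (busemann_bddBelow hc x) (⟨t, ht⟩ : Set.Ici (0:ℝ))

lemma neg_dist_le_busemann {c : ℝ → X} (hc : IsGeodesicRay c) (x : X) :
    -dist (c 0) x ≤ busemann c x := by
  refine le_ciInf ?_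
  rintro ⟨s, hs⟩
  simp only
  have h1 : dist (c 0) (c s) = s := ray_dist_zero hc hs
  have h2 : dist (c 0) (c s) ≤ dist (c 0) x + dist x (c s) := dist_triangle _ _ _
  linarith

lemma busemann_le_add {c : ℝ → X} (hc : IsGeodesicRay c) (x y : X) :
    busemann c x ≤ busemann c y + dist x y := by
  have : busemann c x - dist x y ≤ busemann c y := by
    refine le_ciInf ?_
    rintro ⟨s, hs⟩
    simp only
    have := busemann_le hc x hs
    have htri : dist x (c s) ≤ dist x y + dist y (c s) := dist_triangle _ _ _
    linarith
  linarith

lemma busemann_self {c : ℝ → X} (hc : IsGeodesicRay c) {t : ℝ} (ht : 0 ≤ t) :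
    busemann c (c t) = -t := by
  refine le_antisymm ?_ ?_
  · have := busemann_le hc (c t) ht
    simpa using this
  · refine le_ciInf ?_
    rintro ⟨s, hs⟩
    simp only
    rw [hc t s ht hs]
    have : s - t ≤ |t - s| := by rw [abs_sub_comm]; exact le_abs_self _
    linarith

lemma busemann_approx {c : ℝ → X} (hc : IsGeodesicRay c) (x : X) {ε : ℝ} (hε : 0 < ε) :
    ∃ T, 0 ≤ T ∧ ∀ t, T ≤ t → dist x (c t) - t ≤ busemann c x + ε := by
  have hlt : busemann c x < busemann c x + ε := by linarith
  obtain ⟨⟨T, hT⟩, hTlt⟩ := exists_lt_of_ciInf_lt hlt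
  refine ⟨T, hT, fun t htT => ?_⟩
  have ht : (0:ℝ) ≤ t := le_trans hT htT
  have h1 : dist x (c t) ≤ dist x (c T) + dist (c T) (c t) := dist_triangle _ _ _
  have h2 : dist (c T) (c t) = t - T := by
    rw [hc T t hT ht, abs_of_nonpos (by linarith)]; ring
  simp only at hTlt
  linarith

end Part1
section Part2

variable {X : Type*} [MetricSpace X]

/-- Convexity of the distance to a point along geodesics, from the CN inequality. -/
lemma dist_convex (hX : CAT0Space X) {γ : ℝ → X} {x y : X}
    (hγ : IsGeodesicSegment γ x y) (z : X) {t : ℝ} (ht : t ∈ Set.Icc (0:ℝ) 1) :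
    dist z (γ t) ≤ (1 - t) * dist z x + t * dist z y := by
  have hCN := hX.2 γ x y hγ z t ht
  obtain ⟨ht0, ht1⟩ := ht
  have habs : |dist z x - dist z y| ≤ dist x y := by
    have h := abs_dist_sub_le x y z
    rwa [dist_comm x z, dist_comm y z] at h
  have h1 : dist z x - dist z y ≤ dist x y := le_trans (le_abs_self _) habs
  have h2 : dist z y - dist z x ≤ dist x y := by
    rw [abs_sub_comm] at habs; exact le_trans (le_abs_self _) habs
  have hd : (0:ℝ) ≤ dist x y := dist_nonneg
  have hzx : (0:ℝ) ≤ dist z x := dist_nonneg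
  have hzy : (0:ℝ) ≤ dist z y := dist_nonneg
  have hzg : (0:ℝ) ≤ dist z (γ t) := dist_nonneg
  have hsq2 : (dist z x - dist z y) ^ 2 ≤ dist x y ^ 2 := by nlinarith
  have hkey : 0 ≤ t * (1 - t) * (dist x y ^ 2 - (dist z x - dist z y) ^ 2) :=
    mul_nonneg (mul_nonneg ht0 (by linarith)) (by linarith)
  have hsq : dist z (γ t) ^ 2 ≤ ((1 - t) * dist z x + t * dist z y) ^ 2 := by
    nlinarith
  have hrhs : (0:ℝ) ≤ (1 - t) * dist z x + t * dist z y := by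
    have := mul_nonneg (by linarith : (0:ℝ) ≤ 1 - t) hzx
    have := mul_nonneg ht0 hzy
    linarith
  nlinarith

/-- Busemann functions are convex along geodesics. -/
lemma busemann_convex (hX : CAT0Space X) {c : ℝ → X} (hc : IsGeodesicRay c)
    {γ : ℝ → X} {x y : X} (hγ : IsGeodesicSegment γ x y)
    {s : ℝ} (hs : s ∈ Set.Icc (0:ℝ) 1) :
    busemann c (γ s) ≤ (1 - s) * busemann c x + s * busemann c y := by
  refine le_of_forall_pos_le_add (fun ε hε => ?_)
  obtain ⟨Tx, hTx0, hTx⟩ := busemann_approx hc x hε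
  obtain ⟨Ty, hTy0, hTy⟩ := busemann_approx hc y hε
  set t := max Tx Ty with htdef
  have ht0 : (0:ℝ) ≤ t := le_trans hTx0 (le_max_left _ _)
  have h1 : busemann c (γ s) ≤ dist (γ s) (c t) - t := busemann_le hc _ ht0
  have h2 : dist (c t) (γ s) ≤ (1 - s) * dist (c t) x + s * dist (c t) y :=
    dist_convex hX hγ (c t) hs
  have hx' := hTx t (le_max_left _ _)
  have hy' := hTy t (le_max_right _ _)
  obtain ⟨hs0, hs1⟩ := hs
  have e1 : (1 - s) * (dist x (c t) - t) ≤ (1 - s) * (busemann c x + ε) :=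
    mul_le_mul_of_nonneg_left hx' (by linarith)
  have e2 : s * (dist y (c t) - t) ≤ s * (busemann c y + ε) :=
    mul_le_mul_of_nonneg_left hy' hs0
  have hcomm : dist (γ s) (c t) = dist (c t) (γ s) := dist_comm _ _
  have hcx : dist (c t) x = dist x (c t) := dist_comm _ _
  have hcy : dist (c t) y = dist y (c t) := dist_comm _ _
  nlinarith

/-- A Busemann function which is bounded above along a ray from the basepoint is ≤ 0 there. -/
lemma busemann_ray_nonpos {c c₂ : ℝ → X} (hX : CAT0Space X) (hc : IsGeodesicRay c)
    (hc₂ : IsGeodesicRay c₂) (h0 : c₂ 0 = c 0) {M : ℝ}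
    (hM : ∀ s, 0 ≤ s → busemann c (c₂ s) ≤ M) :
    ∀ s, 0 ≤ s → busemann c (c₂ s) ≤ 0 := by
  intro s hs
  rcases eq_or_lt_of_le hs with h | hs'
  · rw [← h, h0]
    have := busemann_self hc (le_refl (0:ℝ))
    simp at this
    simp [this]
  refine le_of_forall_pos_le_add (fun ε hε => ?_)
  set M₀ := max M 1 with hM₀def
  have hM₀pos : (0:ℝ) < M₀ := lt_of_lt_of_le one_pos (le_max_right _ _)
  set s' := max s (s * M₀ / ε) with hs'def
  have hss' : s ≤ s' := le_max_left _ _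
  have hs'pos : 0 < s' := lt_of_lt_of_le hs' hss'
  have hs'2 : s * M₀ / ε ≤ s' := le_max_right _ _
  -- the segment γ(μ) = c₂ (μ * s') from c₂ 0 to c₂ s'
  have hseg : IsGeodesicSegment (fun μ => c₂ (μ * s')) (c₂ 0) (c₂ s') := by
    refine ⟨by simp, by simp, fun a ha b hb => ?_⟩
    have ha0 : 0 ≤ a * s' := mul_nonneg ha.1 hs'pos.le
    have hb0 : 0 ≤ b * s' := mul_nonneg hb.1 hs'pos.le
    rw [hc₂ _ _ ha0 hb0, ray_dist_zero hc₂ hs'pos.le]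
    rw [← sub_mul, abs_mul, abs_of_nonneg hs'pos.le]
  have hmem : s / s' ∈ Set.Icc (0:ℝ) 1 := by
    constructor
    · positivity
    · rw [div_le_one hs'pos]; exact hss'
  have hconv := busemann_convex hX hc hseg hmem
  have heval : s / s' * s' = s := by field_simp
  rw [heval] at hconv
  have hb0 : busemann c (c₂ 0) = 0 := by
    rw [h0]
    have := busemann_self hc (le_refl (0:ℝ))
    simpa using this
  rw [hb0] at hconv
  have hbs' : busemann c (c₂ s') ≤ M := hM s' hs'pos.le
  have hfrac0 : 0 ≤ s / s' := hmem.1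
  have step : busemann c (c₂ s) ≤ (s / s') * M₀ := by
    have : (s / s') * busemann c (c₂ s') ≤ (s / s') * M₀ :=
      mul_le_mul_of_nonneg_left (le_trans hbs' (le_max_left _ _)) hfrac0
    nlinarith
  have final : (s / s') * M₀ ≤ ε := by
    rw [div_mul_eq_mul_div, div_le_iff₀ hs'pos]
    have : s * M₀ / ε ≤ s' := hs'2
    calc s * M₀ = (s * M₀ / ε) * ε := by field_simp
    _ ≤ s' * ε := by
        apply mul_le_mul_of_nonneg_right this hε.le
    _ = ε * s' := mul_comm _ _
  linarith

end Part2
section Part3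
set_option maxHeartbeats 1000000

variable {X : Type*} [MetricSpace X]

/-- Key CAT(0) estimate: `d(x, c a)² ≤ d(o,x)² + a² + 2·a·b_c(x)`. -/
lemma busemann_dist_sq (hX : CAT0Space X) {c : ℝ → X} (hc : IsGeodesicRay c)
    (x : X) {a : ℝ} (ha : 0 ≤ a) :
    dist x (c a) ^ 2 ≤ dist (c 0) x ^ 2 + a ^ 2 + 2 * a * busemann c x := by
  rcases eq_or_lt_of_le ha with h | hapos
  · rw [← h]
    rw [dist_comm]
    nlinarith [dist_nonneg (x := c 0) (y := x)]
  set b := busemann c x with hbdef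
  set R := dist (c 0) x with hRdef
  refine le_of_forall_pos_le_add (fun ε hε => ?_)
  set ε₁ := ε / (2 * a + 1) with hε₁def
  have hε₁pos : 0 < ε₁ := by positivity
  obtain ⟨T, hT0, hT⟩ := busemann_approx hc x hε₁pos
  set t := max (max T a) (max (a * (|(b + ε₁) ^ 2 - R ^ 2| + 1) / ε₁) (|b| + 1)) with htdef
  have htT : T ≤ t := le_trans (le_max_left _ _) (le_max_left _ _)
  have hta : a ≤ t := le_trans (le_max_right _ _) (le_max_left _ _)
  have htpos : 0 < t := lt_of_lt_of_le hapos hta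
  have htb : |b| + 1 ≤ t := le_trans (le_max_right _ _) (le_max_right _ _)
  have htfrac : a * (|(b + ε₁) ^ 2 - R ^ 2| + 1) / ε₁ ≤ t :=
    le_trans (le_max_left _ _) (le_max_right _ _)
  have hdistxt : dist x (c t) ≤ t + b + ε₁ := by
    have := hT t htT
    linarith
  have hdistnneg : (0:ℝ) ≤ dist x (c t) := dist_nonneg
  have htbpos : 0 ≤ t + b + ε₁ := by
    have : -|b| ≤ b := neg_abs_le b
    linarith
  -- the geodesic segment from c 0 to c t
  have hseg : IsGeodesicSegment (fun μ => c (μ * t)) (c 0) (c t) := by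
    refine ⟨by simp, by simp, fun p hp q hq => ?_⟩
    have hp0 : 0 ≤ p * t := mul_nonneg hp.1 htpos.le
    have hq0 : 0 ≤ q * t := mul_nonneg hq.1 htpos.le
    rw [hc _ _ hp0 hq0, ray_dist_zero hc htpos.le, ← sub_mul, abs_mul,
      abs_of_nonneg htpos.le]
  have hmem : a / t ∈ Set.Icc (0:ℝ) 1 := by
    constructor
    · positivity
    · rw [div_le_one htpos]; exact hta
  have hCN := hX.2 _ _ _ hseg x (a / t) hmem
  have heval : a / t * t = a := by field_simp
  rw [heval] at hCN
  have hct : dist (c 0) (c t) = t := ray_dist_zero hc htpos.le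
  rw [hct, dist_comm x (c 0), ← hRdef] at hCN
  have hxt2 : dist x (c t) ^ 2 ≤ (t + b + ε₁) ^ 2 := by nlinarith
  have h2 : dist x (c a) ^ 2 ≤
      (1 - a / t) * R ^ 2 + (a / t) * (t + b + ε₁) ^ 2 - (a / t) * (1 - a / t) * t ^ 2 := by
    have hfrac : 0 ≤ a / t := hmem.1
    nlinarith
  have hident : (1 - a / t) * R ^ 2 + (a / t) * (t + b + ε₁) ^ 2
      - (a / t) * (1 - a / t) * t ^ 2
      = R ^ 2 + a ^ 2 + 2 * a * (b + ε₁) + (a / t) * ((b + ε₁) ^ 2 - R ^ 2) := by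
    field_simp
    ring
  rw [hident] at h2
  have herr : (a / t) * ((b + ε₁) ^ 2 - R ^ 2) ≤ ε₁ := by
    have h1 : (a / t) * ((b + ε₁) ^ 2 - R ^ 2) ≤ (a / t) * |(b + ε₁) ^ 2 - R ^ 2| :=
      mul_le_mul_of_nonneg_left (le_abs_self _) hmem.1
    have h2' : a * |(b + ε₁) ^ 2 - R ^ 2| ≤ ε₁ * t := by
      have := htfrac
      rw [div_le_iff₀ hε₁pos] at this
      have ha' : 0 ≤ a := ha
      nlinarith [abs_nonneg ((b + ε₁) ^ 2 - R ^ 2)]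
    calc (a / t) * ((b + ε₁) ^ 2 - R ^ 2) ≤ (a / t) * |(b + ε₁) ^ 2 - R ^ 2| := h1
      _ = a * |(b + ε₁) ^ 2 - R ^ 2| / t := by ring
      _ ≤ ε₁ * t / t := by gcongr
      _ = ε₁ := by field_simp
  have hfin : 2 * a * ε₁ + ε₁ = ε := by
    rw [hε₁def]; field_simp
  linarith

/-- Two geodesic rays from the same point diverge at most linearly backwards:
`d(c(λs), c'(λs)) ≤ λ d(c s, c' s)`. -/
lemma same_apex (hX : CAT0Space X) {c c' : ℝ → X} (hc : IsGeodesicRay c)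
    (hc' : IsGeodesicRay c') (h0 : c' 0 = c 0) {s lam : ℝ} (hs : 0 ≤ s)
    (hlam : lam ∈ Set.Icc (0:ℝ) 1) :
    dist (c (lam * s)) (c' (lam * s)) ≤ lam * dist (c s) (c' s) := by
  rcases eq_or_lt_of_le hs with h | hspos
  · rw [← h, mul_zero]
    have hz : dist (c 0) (c' 0) = 0 := by rw [h0, dist_self]
    rw [hz]
    simp
  have hsegc : IsGeodesicSegment (fun μ => c (μ * s)) (c 0) (c s) := by
    refine ⟨by simp, by simp, fun p hp q hq => ?_⟩
    have hp0 : 0 ≤ p * s := mul_nonneg hp.1 hspos.le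
    have hq0 : 0 ≤ q * s := mul_nonneg hq.1 hspos.le
    rw [hc _ _ hp0 hq0, ray_dist_zero hc hspos.le, ← sub_mul, abs_mul,
      abs_of_nonneg hspos.le]
  have hsegc' : IsGeodesicSegment (fun μ => c' (μ * s)) (c' 0) (c' s) := by
    refine ⟨by simp, by simp, fun p hp q hq => ?_⟩
    have hp0 : 0 ≤ p * s := mul_nonneg hp.1 hspos.le
    have hq0 : 0 ≤ q * s := mul_nonneg hq.1 hspos.le
    rw [hc' _ _ hp0 hq0, ray_dist_zero hc' hspos.le, ← sub_mul, abs_mul,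
      abs_of_nonneg hspos.le]
  have h1 := hX.2 _ _ _ hsegc (c' s) lam hlam
  have h2 := hX.2 _ _ _ hsegc' (c (lam * s)) lam hlam
  obtain ⟨hl0, hl1⟩ := hlam
  have e1 : dist (c' s) (c 0) = s := by
    rw [← h0, dist_comm]; exact ray_dist_zero hc' hspos.le
  have e2 : dist (c 0) (c s) = s := ray_dist_zero hc hspos.le
  have e3 : dist (c (lam * s)) (c' 0) = lam * s := by
    rw [h0, dist_comm]
    rw [ray_dist_zero hc (by positivity)]
  have e4 : dist (c' 0) (c' s) = s := ray_dist_zero hc' hspos.le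
  rw [e1, e2] at h1
  rw [e3, e4] at h2
  have e5 : dist (c (lam * s)) (c' s) = dist (c' s) (c (lam * s)) := dist_comm _ _
  rw [e5] at h2
  set d := dist (c (lam * s)) (c' (lam * s)) with hddef
  set f := dist (c s) (c' s) with hfdef
  set A := dist (c' s) (c (lam * s)) with hAdef
  have e6 : dist (c' s) (c s) = f := dist_comm _ _
  rw [e6] at h1
  have h1' := mul_le_mul_of_nonneg_left h1 hl0
  have hsq : d ^ 2 ≤ (lam * f) ^ 2 := by nlinarith
  have hd0 : 0 ≤ d := dist_nonneg
  have hlf0 : 0 ≤ lam * f := mul_nonneg hl0 dist_nonneg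
  have := Real.sqrt_le_sqrt hsq
  rwa [Real.sqrt_sq hd0, Real.sqrt_sq hlf0] at this

/-- Linear divergence of distinct rays from a common point. -/
lemma diverge (hX : CAT0Space X) {c c' : ℝ → X} (hc : IsGeodesicRay c)
    (hc' : IsGeodesicRay c') (h0 : c' 0 = c 0) {t₁ : ℝ} (ht₁ : 0 < t₁) :
    ∀ s, t₁ ≤ s → dist (c t₁) (c' t₁) / t₁ * s ≤ dist (c s) (c' s) := by
  intro s hts
  have hspos : 0 < s := lt_of_lt_of_le ht₁ hts
  have hlam : t₁ / s ∈ Set.Icc (0:ℝ) 1 := by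
    constructor
    · positivity
    · rw [div_le_one hspos]; exact hts
  have := same_apex hX hc hc' h0 hspos.le hlam
  have heval : t₁ / s * s = t₁ := by field_simp
  rw [heval] at this
  have h5 : dist (c t₁) (c' t₁) * s ≤ (t₁ / s * dist (c s) (c' s)) * s :=
    mul_le_mul_of_nonneg_right this hspos.le
  have h6 : (t₁ / s * dist (c s) (c' s)) * s = dist (c s) (c' s) * t₁ := by
    field_simp
  rw [div_mul_eq_mul_div, div_le_iff₀ ht₁]
  linarith

/-- Distance from a diverging ray to every point of the other ray. -/
lemma diverge_pt (hX : CAT0Space X) {c c' : ℝ → X} (hc : IsGeodesicRay c)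
    (hc' : IsGeodesicRay c') (h0 : c' 0 = c 0) {t₁ : ℝ} (ht₁ : 0 < t₁) :
    ∀ s, t₁ ≤ s → ∀ a, 0 ≤ a →
      dist (c t₁) (c' t₁) / t₁ * s / 2 ≤ dist (c' s) (c a) := by
  intro s hts a ha
  have hspos : 0 < s := lt_of_lt_of_le ht₁ hts
  have hdiv := diverge hX hc hc' h0 ht₁ s hts
  have h1 : dist (c s) (c' s) ≤ dist (c s) (c a) + dist (c a) (c' s) := dist_triangle _ _ _
  have h2 : dist (c s) (c a) = |s - a| := hc s a hspos.le ha
  have h3 : |s - a| ≤ dist (c a) (c' s) := by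
    rw [abs_sub_le_iff]
    constructor
    · have t1 : dist (c 0) (c s) ≤ dist (c 0) (c a) + dist (c a) (c s) := dist_triangle _ _ _
      have t2 : dist (c 0) (c' s) ≤ dist (c 0) (c a) + dist (c a) (c' s) := dist_triangle _ _ _
      have e1 : dist (c 0) (c' s) = s := by rw [← h0]; exact ray_dist_zero hc' hspos.le
      have e2 : dist (c 0) (c a) = a := ray_dist_zero hc ha
      rw [e1, e2] at t2
      linarith
    · have t2 : dist (c 0) (c a) ≤ dist (c 0) (c' s) + dist (c' s) (c a) := dist_triangle _ _ _
      have e1 : dist (c 0) (c' s) = s := by rw [← h0]; exact ray_dist_zero hc' hspos.le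
      have e2 : dist (c 0) (c a) = a := ray_dist_zero hc ha
      rw [e1, e2, dist_comm (c' s) (c a)] at t2
      linarith
  have h4 : dist (c a) (c' s) = dist (c' s) (c a) := dist_comm _ _
  linarith

end Part3
section Part4
set_option maxHeartbeats 1000000

variable {X : Type*} [MetricSpace X]

/-- The key contradiction: a geodesic ray `c₂` from the same basepoint, distinct from a
ray `c` with the bounded-geodesic-image property, cannot stay forever in the horoball
`{b_c ≤ 0}`. -/
lemma key_contradiction (hX : CAT0Space X) {c : ℝ → X} (hc : IsGeodesicRay c)
    {proj : X → X} (hproj : IsProjOnto proj (rayImage c))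
    {c₂ : ℝ → X} (hc₂ : IsGeodesicRay c₂) (h0 : c₂ 0 = c 0)
    {n : ℝ} (hn : 0 ≤ n)
    (hball : ∀ s r : ℝ, 0 ≤ s → Metric.closedBall (c₂ s) r ∩ rayImage c = ∅ →
      Metric.diam (proj '' Metric.closedBall (c₂ s) r) ≤ n)
    {t₁ : ℝ} (ht₁ : 0 < t₁) (hne : c₂ t₁ ≠ c t₁)
    (hbus : ∀ s, 0 ≤ s → busemann c (c₂ s) ≤ 0) : False := by
  set δ := dist (c t₁) (c₂ t₁) / t₁ with hδdef
  have hδpos : 0 < δ := div_pos (dist_pos.mpr (Ne.symm hne)) ht₁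
  have hδ2 : δ ≤ 2 := by
    have h1 : dist (c t₁) (c₂ t₁) ≤ dist (c t₁) (c 0) + dist (c 0) (c₂ t₁) :=
      dist_triangle _ _ _
    have h2 : dist (c t₁) (c 0) = t₁ := by
      rw [dist_comm]; exact ray_dist_zero hc ht₁.le
    have h3 : dist (c 0) (c₂ t₁) = t₁ := by
      rw [← h0]; exact ray_dist_zero hc₂ ht₁.le
    rw [hδdef, div_le_iff₀ ht₁]
    linarith
  have hdivpt : ∀ s, t₁ ≤ s → ∀ a, 0 ≤ a → δ * s / 2 ≤ dist (c₂ s) (c a) := by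
    have h := diverge_pt hX hc hc₂ h0 ht₁
    simp only [← hδdef] at h
    exact h
  have hdisj : ∀ s, t₁ ≤ s → Metric.closedBall (c₂ s) (δ * s / 4) ∩ rayImage c = ∅ := by
    intro s hts
    have hspos : 0 < s := lt_of_lt_of_le ht₁ hts
    rw [Set.eq_empty_iff_forall_notMem]
    rintro y ⟨hy1, a, ha, rfl⟩
    rw [Metric.mem_closedBall] at hy1
    have := hdivpt s hts a ha
    rw [dist_comm] at hy1
    nlinarith [mul_pos hδpos hspos]
  have hbdd : ∀ (p : X) (r : ℝ), Bornology.IsBounded (proj '' Metric.closedBall p r) := by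
    intro p r
    refine (Metric.isBounded_closedBall
      (x := c 0) (r := 2 * (dist p (c 0) + max r 0))).subset ?_
    rintro - ⟨y, hy, rfl⟩
    rw [Metric.mem_closedBall] at hy ⊢
    have h2 : dist y (proj y) ≤ dist y (c 0) :=
      (hproj y).2 (c 0) ⟨0, Set.self_mem_Ici, rfl⟩
    have h1 : dist (proj y) (c 0) ≤ dist (proj y) y + dist y (c 0) := dist_triangle _ _ _
    have h3 : dist y (c 0) ≤ dist y p + dist p (c 0) := dist_triangle _ _ _
    have h4 : dist y p ≤ max r 0 := le_trans hy (le_max_left _ _)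
    have h5 : dist (proj y) y = dist y (proj y) := dist_comm _ _
    linarith
  -- the projected points drift at most n per multiplicative step 1 + δ/4
  have hstep : ∀ s, t₁ ≤ s →
      dist (proj (c₂ s)) (proj (c₂ (s * (1 + δ / 4)))) ≤ n := by
    intro s hts
    have hspos : 0 < s := lt_of_lt_of_le ht₁ hts
    have hr : (0:ℝ) ≤ δ * s / 4 := by positivity
    have hmem1 : c₂ s ∈ Metric.closedBall (c₂ s) (δ * s / 4) :=
      Metric.mem_closedBall_self hr
    have hmem2 : c₂ (s * (1 + δ / 4)) ∈ Metric.closedBall (c₂ s) (δ * s / 4) := by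
      rw [Metric.mem_closedBall, dist_comm]
      have harg : 0 ≤ s * (1 + δ / 4) := by positivity
      rw [hc₂ _ _ hspos.le harg]
      rw [abs_of_nonpos (by nlinarith)]
      nlinarith
    have hdiam := hball s (δ * s / 4) (le_trans ht₁.le hts) (hdisj s hts)
    exact le_trans (Metric.dist_le_diam_of_mem (hbdd _ _)
      (Set.mem_image_of_mem proj hmem1) (Set.mem_image_of_mem proj hmem2)) hdiam
  set u : ℝ → ℝ := fun s => dist (c 0) (proj (c₂ s)) with hudef
  have hchain : ∀ j : ℕ, u (t₁ * (1 + δ / 4) ^ j) ≤ u t₁ + n * j := by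
    intro j
    induction j with
    | zero => simp
    | succ j ih =>
      have hq1 : (1:ℝ) ≤ 1 + δ / 4 := by linarith
      have hpow : (1:ℝ) ≤ (1 + δ / 4) ^ j := one_le_pow₀ hq1
      have hsj : t₁ ≤ t₁ * (1 + δ / 4) ^ j := by nlinarith
      have harg : t₁ * (1 + δ / 4) ^ (j + 1) = (t₁ * (1 + δ / 4) ^ j) * (1 + δ / 4) := by
        rw [pow_succ]; ring
      have htri : u (t₁ * (1 + δ / 4) ^ (j + 1)) ≤ u (t₁ * (1 + δ / 4) ^ j)
          + dist (proj (c₂ (t₁ * (1 + δ / 4) ^ j)))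
            (proj (c₂ ((t₁ * (1 + δ / 4) ^ j) * (1 + δ / 4)))) := by
        rw [harg]
        exact dist_triangle _ _ _
      have := hstep _ hsj
      push_cast
      push_cast at ih
      linarith
  -- the main estimate at scale s
  have hmain : ∀ s, t₁ ≤ s → 8 / δ ≤ s → δ ^ 2 * s / 64 - δ / 8 ≤ u s + n := by
    intro s hts h8
    have hspos : 0 < s := lt_of_lt_of_le ht₁ hts
    set ρ := δ * s / 4 with hρdef
    have hρ2 : 2 ≤ ρ := by
      rw [hρdef]
      rw [div_le_iff₀ hδpos] at h8
      nlinarith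
    obtain ⟨T, hT0, hT⟩ := busemann_approx hc (c₂ s) one_pos
    have hD1 : dist (c₂ s) (c T) ≤ T + 1 := by
      have h1 := hT T le_rfl
      have h2 := hbus s (le_trans ht₁.le hts)
      linarith
    set D := dist (c₂ s) (c T) with hDdef
    have hD2ρ : 2 * ρ ≤ D := by
      have := hdivpt s hts T hT0
      rw [hρdef]; linarith
    have hDpos : 0 < D := by linarith
    obtain ⟨γ, hγ⟩ := hX.1 (c₂ s) (c T)
    have hlam : ρ / D ∈ Set.Icc (0:ℝ) 1 := by
      constructor
      · positivity
      · rw [div_le_one hDpos]; linarith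
    set z := γ (ρ / D) with hzdef
    have hz1 : dist (c₂ s) z = ρ := by
      have := hγ.2.2 0 ⟨le_rfl, zero_le_one⟩ (ρ / D) hlam
      rw [hγ.1] at this
      rw [hzdef, this, ← hDdef]
      rw [abs_of_nonpos (by simpa using hlam.1)]
      field_simp
      ring
    have hz2 : dist z (c T) = D - ρ := by
      have := hγ.2.2 (ρ / D) hlam 1 ⟨zero_le_one, le_rfl⟩
      rw [hγ.2.1] at this
      rw [hzdef, this, ← hDdef]
      rw [abs_of_nonpos (by linarith [hlam.2])]
      field_simp
      ring
    have hbz : busemann c z ≤ 1 - ρ := by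
      have h1 := busemann_le_add hc z (c T)
      rw [busemann_self hc hT0] at h1
      rw [hz2] at h1
      linarith
    set Rz := dist (c 0) z with hRzdef
    have hRz1 : Rz ≤ s + ρ := by
      have h1 : dist (c 0) z ≤ dist (c 0) (c₂ s) + dist (c₂ s) z := dist_triangle _ _ _
      have h2 : dist (c 0) (c₂ s) = s := by rw [← h0]; exact ray_dist_zero hc₂ hspos.le
      rw [hRzdef]; rw [h2, hz1] at h1; linarith
    have hRz2 : ρ - 1 ≤ Rz := by
      have := neg_dist_le_busemann hc z
      rw [← hRzdef] at this
      linarith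
    have hRzpos : 0 < Rz := by linarith
    have hL4 := busemann_dist_sq hX hc z (a := ρ - 1) (by linarith)
    have hL4' : dist z (c (ρ - 1)) ^ 2 ≤ Rz ^ 2 - (ρ - 1) ^ 2 := by
      have hmul : 2 * (ρ - 1) * busemann c z ≤ 2 * (ρ - 1) * (1 - ρ) := by
        apply mul_le_mul_of_nonneg_left hbz (by linarith)
      rw [← hRzdef] at hL4
      nlinarith
    set dpz := dist z (proj z) with hdpzdef
    have hdpz1 : dpz ≤ dist z (c (ρ - 1)) :=
      (hproj z).2 (c (ρ - 1)) ⟨ρ - 1, by simp; linarith, rfl⟩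
    have hdpz2 : dpz ^ 2 ≤ Rz ^ 2 - (ρ - 1) ^ 2 := by
      have := pow_le_pow_left₀ dist_nonneg hdpz1 2
      linarith
    have hdpz0 : 0 ≤ dpz := dist_nonneg
    -- z lies in the ball of radius ρ around c₂ s, so its projection is close to proj (c₂ s)
    have hzmem : z ∈ Metric.closedBall (c₂ s) (δ * s / 4) := by
      rw [Metric.mem_closedBall, dist_comm, hz1, hρdef]
    have hsmem : c₂ s ∈ Metric.closedBall (c₂ s) (δ * s / 4) :=
      Metric.mem_closedBall_self (by positivity)
    have hprojnear : dist (proj z) (proj (c₂ s)) ≤ n := by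
      have hdiam := hball s (δ * s / 4) (by linarith) (hdisj s hts)
      exact le_trans (Metric.dist_le_diam_of_mem (hbdd _ _)
        (Set.mem_image_of_mem proj hzmem) (Set.mem_image_of_mem proj hsmem)) hdiam
    have hu : dist (c 0) (proj z) ≤ u s + n := by
      have h1 : dist (c 0) (proj z) ≤ dist (c 0) (proj (c₂ s)) + dist (proj (c₂ s)) (proj z) :=
        dist_triangle _ _ _
      rw [dist_comm (proj (c₂ s)) (proj z)] at h1
      have : u s = dist (c 0) (proj (c₂ s)) := rfl
      linarith
    have hRzsplit : Rz ≤ (u s + n) + dpz := by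
      have h1 : dist (c 0) z ≤ dist (c 0) (proj z) + dist (proj z) z := dist_triangle _ _ _
      rw [dist_comm (proj z) z] at h1
      rw [hRzdef]
      linarith
    have hdr : dpz ≤ Rz := by
      have hsq : dpz ^ 2 ≤ Rz ^ 2 := by nlinarith [sq_nonneg (ρ - 1)]
      have := Real.sqrt_le_sqrt hsq
      rwa [Real.sqrt_sq hdpz0, Real.sqrt_sq hRzpos.le] at this
    have hun0 : 0 ≤ u s + n := by
      have : (0:ℝ) ≤ u s := dist_nonneg
      linarith
    have h4 : (ρ - 1) ^ 2 ≤ (u s + n) * (Rz + dpz) := by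
      have ha : (ρ - 1) ^ 2 ≤ (Rz - dpz) * (Rz + dpz) := by nlinarith
      have hb : (Rz - dpz) * (Rz + dpz) ≤ (u s + n) * (Rz + dpz) := by
        apply mul_le_mul_of_nonneg_right (by linarith) (by linarith)
      linarith
    have h5 : Rz + dpz ≤ 4 * s := by
      have : ρ ≤ s / 2 := by rw [hρdef]; nlinarith
      linarith
    have h6 : (ρ - 1) ^ 2 ≤ (u s + n) * (4 * s) := by
      have := mul_le_mul_of_nonneg_left h5 hun0
      linarith
    rw [hρdef] at h6
    nlinarith
  -- final contradiction: compare quadratic growth with linear drift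
  set A := δ ^ 4 * t₁ / 1024 with hAdef
  have hApos : 0 < A := by positivity
  set B := u t₁ + n + δ / 8 with hBdef
  have hB0 : 0 ≤ B := by
    have : (0:ℝ) ≤ u t₁ := dist_nonneg
    rw [hBdef]; positivity
  set E := 2 * n with hEdef
  have hE0 : 0 ≤ E := by positivity
  obtain ⟨i, hi⟩ := exists_nat_gt (max (max 1 ((E + B) / A)) (8 / δ * 16 / (t₁ * δ ^ 2)))
  have hi1 : (1:ℝ) ≤ (i:ℝ) := by
    have h1 : (1:ℝ) < i :=
      lt_of_le_of_lt (le_trans (le_max_left 1 ((E + B) / A)) (le_max_left _ _)) hi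
    linarith
  have hipos : (0:ℝ) < (i:ℝ) := by linarith
  have hiEB : E + B < A * i := by
    have h1 : (E + B) / A < i :=
      lt_of_le_of_lt (le_trans (le_max_right 1 ((E + B) / A)) (le_max_left _ _)) hi
    rw [div_lt_iff₀ hApos] at h1
    linarith
  have hi8 : 8 / δ * 16 / (t₁ * δ ^ 2) < i := lt_of_le_of_lt (le_max_right _ _) hi
  have hq1 : (1:ℝ) ≤ 1 + δ / 4 := by linarith
  set s := t₁ * (1 + δ / 4) ^ (2 * i) with hsdef
  have hpow1 : (1:ℝ) ≤ (1 + δ / 4) ^ (2 * i) := one_le_pow₀ hq1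
  have hst₁ : t₁ ≤ s := by rw [hsdef]; nlinarith
  have hBern : 1 + (i:ℝ) * (δ / 4) ≤ (1 + δ / 4) ^ i :=
    one_add_mul_le_pow (by linarith) i
  have hslb : t₁ * ((i:ℝ) * (δ / 4)) ^ 2 ≤ s := by
    rw [hsdef, two_mul, pow_add]
    have hx0 : (0:ℝ) ≤ (i:ℝ) * (δ / 4) := by positivity
    have hq0 : (0:ℝ) ≤ (1 + δ / 4) ^ i := by positivity
    have hsq := mul_le_mul hBern hBern (by positivity) hq0
    nlinarith [ht₁.le]
  have h8δ : 8 / δ ≤ s := by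
    have hi2 : (i:ℝ) ≤ (i:ℝ) ^ 2 := by nlinarith
    have h1 : t₁ * δ ^ 2 / 16 * i ≤ t₁ * ((i:ℝ) * (δ / 4)) ^ 2 := by
      nlinarith [mul_le_mul_of_nonneg_left hi2 (by positivity : (0:ℝ) ≤ t₁ * δ ^ 2 / 16)]
    have h2 : 8 / δ < t₁ * δ ^ 2 / 16 * i := by
      rw [div_lt_iff₀ (by positivity : (0:ℝ) < t₁ * δ ^ 2)] at hi8
      nlinarith
    linarith
  have hm := hmain s hst₁ h8δ
  have hch := hchain (2 * i)
  rw [← hsdef] at hch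
  have hsA : A * (i:ℝ) ^ 2 ≤ δ ^ 2 * s / 64 := by
    have hmul := mul_le_mul_of_nonneg_left hslb (by positivity : (0:ℝ) ≤ δ ^ 2 / 64)
    rw [hAdef]
    nlinarith
  have hfin : A * (i:ℝ) ^ 2 ≤ B + E * i := by
    push_cast at hch
    rw [hBdef, hEdef]
    nlinarith
  nlinarith [mul_lt_mul_of_pos_right hiEB hipos, mul_le_mul_of_nonneg_left hi1 hB0]

end Part4
section Part5
set_option maxHeartbeats 1000000

variable {X : Type*} [MetricSpace X]

/-- From a sequence of geodesic segments from `o` to points going to infinity, extract a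
limit geodesic ray from `o` (via an ultrafilter limit, using properness). -/
lemma exists_limit_ray [ProperSpace X] (o : X) (x : ℕ → X)
    (hx : ∀ j : ℕ, (j:ℝ) + 1 ≤ dist o (x j))
    (γ : ℕ → ℝ → X) (hγ : ∀ j, IsGeodesicSegment (γ j) o (x j)) :
    ∃ c₂ : ℝ → X, IsGeodesicRay c₂ ∧ c₂ 0 = o ∧
      ∀ τ ε : ℝ, 0 ≤ τ → 0 < ε →
        ∃ j : ℕ, ∃ lam ∈ Set.Icc (0:ℝ) 1, dist (c₂ τ) (γ j lam) ≤ ε := by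
  have hRpos : ∀ j, (0:ℝ) < dist o (x j) := fun j => by
    have h1 : (0:ℝ) ≤ (j:ℝ) := Nat.cast_nonneg j
    linarith [hx j]
  set L : ℕ → ℝ → ℝ := fun j τ => max 0 (min (τ / dist o (x j)) 1) with hLdef
  have hLmem : ∀ j τ, L j τ ∈ Set.Icc (0:ℝ) 1 := by
    intro j τ
    constructor
    · exact le_max_left _ _
    · apply max_le (zero_le_one)
      exact min_le_right _ _
  set σ : ℕ → ℝ → X := fun j τ => γ j (L j τ) with hσdef
  have hdist0 : ∀ j τ, dist o (σ j τ) = L j τ * dist o (x j) := by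
    intro j τ
    have h := (hγ j).2.2 0 ⟨le_rfl, zero_le_one⟩ (L j τ) (hLmem j τ)
    rw [(hγ j).1] at h
    rw [hσdef]
    simp only
    rw [h]
    rw [abs_of_nonpos (by linarith [(hLmem j τ).1])]
    ring
  have hball : ∀ j τ, σ j τ ∈ Metric.closedBall o (max τ 0) := by
    intro j τ
    rw [Metric.mem_closedBall, dist_comm, hdist0]
    rcases le_or_gt τ 0 with hτ | hτ
    · have : L j τ = 0 := by
        rw [hLdef]
        simp only
        rw [max_eq_left]
        apply le_trans (min_le_left _ _)
        apply div_nonpos_of_nonpos_of_nonneg hτ (hRpos j).le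
      rw [this, zero_mul]
      exact le_max_right _ _
    · have h1 : L j τ ≤ τ / dist o (x j) := by
        rw [hLdef]
        simp only
        apply max_le
        · positivity
        · exact min_le_left _ _
      have h2 : L j τ * dist o (x j) ≤ τ := by
        have := mul_le_mul_of_nonneg_right h1 (hRpos j).le
        rwa [div_mul_cancel₀ _ (hRpos j).ne'] at this
      exact le_trans h2 (le_max_left _ _)
  set U : Ultrafilter ℕ := Ultrafilter.of Filter.atTop with hUdef
  have hUle : (U : Filter ℕ) ≤ Filter.atTop := Ultrafilter.of_le _
  have hch : ∀ τ : ℝ, ∃ p, Filter.Tendsto (fun j => σ j τ) (U : Filter ℕ) (nhds p) := by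
    intro τ
    have hcpt : IsCompact (Metric.closedBall o (max τ 0)) := isCompact_closedBall o _
    have hle : (U.map (fun j => σ j τ) : Filter X) ≤ Filter.principal
        (Metric.closedBall o (max τ 0)) := by
      rw [Filter.le_principal_iff]
      exact Filter.mem_map.mpr (Filter.univ_mem' (fun j => hball j τ))
    obtain ⟨p, hp, hple⟩ := hcpt.ultrafilter_le_nhds (U.map (fun j => σ j τ)) hle
    exact ⟨p, hple⟩
  set c₂ : ℝ → X := fun τ => (hch τ).choose with hc₂def
  have hlim : ∀ τ, Filter.Tendsto (fun j => σ j τ) (U : Filter ℕ) (nhds (c₂ τ)) :=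
    fun τ => (hch τ).choose_spec
  have hevdist : ∀ τ τ' : ℝ, 0 ≤ τ → 0 ≤ τ' →
      ∀ᶠ j in (Filter.atTop : Filter ℕ), dist (σ j τ) (σ j τ') = |τ - τ'| := by
    intro τ τ' hτ hτ'
    rw [Filter.eventually_atTop]
    refine ⟨Nat.ceil (max τ τ'), fun j hj => ?_⟩
    have hRj : max τ τ' ≤ dist o (x j) := by
      have h1 : max τ τ' ≤ (Nat.ceil (max τ τ') : ℝ) := Nat.le_ceil _
      have h2 : (Nat.ceil (max τ τ') : ℝ) ≤ (j:ℝ) := Nat.cast_le.mpr hj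
      linarith [hx j]
    have hclamp : ∀ t : ℝ, 0 ≤ t → t ≤ max τ τ' → L j t = t / dist o (x j) := by
      intro t ht htm
      rw [hLdef]
      simp only
      rw [min_eq_left, max_eq_right]
      · positivity
      · rw [div_le_one (hRpos j)]
        linarith
    have e1 : L j τ = τ / dist o (x j) := hclamp τ hτ (le_max_left _ _)
    have e2 : L j τ' = τ' / dist o (x j) := hclamp τ' hτ' (le_max_right _ _)
    have h := (hγ j).2.2 (L j τ) (hLmem j τ) (L j τ') (hLmem j τ')
    rw [hσdef]
    simp only
    rw [h, e1, e2, div_sub_div_same, abs_div, abs_of_nonneg (hRpos j).le,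
      div_mul_cancel₀ _ (hRpos j).ne']
  refine ⟨c₂, ?_, ?_, ?_⟩
  · intro τ τ' hτ hτ'
    have h1 : Filter.Tendsto (fun j => dist (σ j τ) (σ j τ')) (U : Filter ℕ)
        (nhds (dist (c₂ τ) (c₂ τ'))) := (hlim τ).dist (hlim τ')
    have h2 : Filter.Tendsto (fun j => dist (σ j τ) (σ j τ')) (U : Filter ℕ)
        (nhds (|τ - τ'|)) := by
      have hev : (fun j => dist (σ j τ) (σ j τ')) =ᶠ[(U : Filter ℕ)]
          (fun _ => |τ - τ'|) := (hevdist τ τ' hτ hτ').filter_mono hUle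
      exact Filter.Tendsto.congr' hev.symm tendsto_const_nhds
    exact tendsto_nhds_unique h1 h2
  · have hσ0 : ∀ j, σ j 0 = o := by
      intro j
      rw [hσdef]
      simp only
      have : L j 0 = 0 := by
        rw [hLdef]
        simp [zero_div, (hRpos j).le]
      rw [this, (hγ j).1]
    have h1 : Filter.Tendsto (fun j => σ j 0) (U : Filter ℕ) (nhds o) := by
      apply Filter.Tendsto.congr (fun j => (hσ0 j).symm) tendsto_const_nhds
    exact tendsto_nhds_unique (hlim 0) h1
  · intro τ ε hτ hε
    have h1 : Filter.Tendsto (fun j => dist (c₂ τ) (σ j τ)) (U : Filter ℕ) (nhds 0) := by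
      have := Filter.Tendsto.dist (tendsto_const_nhds (x := c₂ τ) (f := (U : Filter ℕ)))
        (hlim τ)
      rwa [dist_self] at this
    have h2 : ∀ᶠ j in (U : Filter ℕ), dist (c₂ τ) (σ j τ) < ε := by
      have : Set.Iio ε ∈ nhds (0:ℝ) := Iio_mem_nhds hε
      exact h1 this
    obtain ⟨j, hj⟩ := h2.exists
    exact ⟨j, L j τ, hLmem j τ, hj.le⟩

end Part5
set_option maxHeartbeats 1000000 in
/-- horoballs centered at distinct boundary points (one of which is
defined by a ray with the bounded geodesic image property) intersect in a bounded set. -/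
theorem horoballs_bounded_intersection
    {X : Type*} [MetricSpace X] [ProperSpace X] [CompleteSpace X]
    (hX : CAT0Space X) (o : X)
    (c : ℝ → X) (hc : IsGeodesicRay c) (hco : c 0 = o)
    (c' : ℝ → X) (hc' : IsGeodesicRay c') (hc'o : c' 0 = o)
    (hdist : ∃ t : ℝ, 0 ≤ t ∧ c t ≠ c' t)
    (proj : X → X) (hproj : IsProjOnto proj (rayImage c))
    (hbgi : BGIP c proj)
    (K K' : ℝ) (h h' : X → ℝ)
    (hh : ∀ x, h x = busemann c x + K)
    (hh' : ∀ x, h' x = busemann c' x + K') :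
    ∀ k k' : ℝ,
      Bornology.IsBounded ({x : X | h x ≤ -k} ∩ {x : X | h' x ≤ -k'}) := by
  intro k k'
  by_contra hub
  set S := {x : X | h x ≤ -k} ∩ {x : X | h' x ≤ -k'} with hSdef
  have hmem : ∀ y ∈ S, busemann c y ≤ -k - K ∧ busemann c' y ≤ -k' - K' := by
    rintro y ⟨hy1, hy2⟩
    rw [Set.mem_setOf_eq, hh y] at hy1
    rw [Set.mem_setOf_eq, hh' y] at hy2
    exact ⟨by linarith, by linarith⟩
  set m₀ := max 0 (max (-k - K) (-k' - K')) with hm₀def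
  have hm₀0 : (0:ℝ) ≤ m₀ := le_max_left _ _
  have hmem' : ∀ y ∈ S, busemann c y ≤ m₀ ∧ busemann c' y ≤ m₀ := by
    intro y hy
    obtain ⟨h1, h2⟩ := hmem y hy
    constructor
    · exact le_trans h1 (le_trans (le_max_left _ _) (le_max_right _ _))
    · exact le_trans h2 (le_trans (le_max_right _ _) (le_max_right _ _))
  -- pick far away points in S
  have hfar : ∀ j : ℕ, ∃ y, y ∈ S ∧ (j:ℝ) + 1 ≤ dist o y := by
    intro j
    by_contra hcon
    push_neg at hcon
    refine hub ((Metric.isBounded_closedBall (x := o) (r := (j:ℝ) + 1)).subset ?_)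
    intro y hy
    rw [Metric.mem_closedBall, dist_comm]
    exact (hcon y hy).le
  choose x hxS hxfar using hfar
  have hgeo : ∀ j : ℕ, ∃ g : ℝ → X, IsGeodesicSegment g o (x j) := fun j => hX.1 o (x j)
  choose γ hγ using hgeo
  obtain ⟨c₂, hc₂ray, hc₂0, happrox⟩ := exists_limit_ray o x hxfar γ hγ
  have hbco : busemann c (c 0) = 0 := by
    have := busemann_self hc (le_refl (0:ℝ))
    simpa using this
  have hbc'o : busemann c' (c' 0) = 0 := by
    have := busemann_self hc' (le_refl (0:ℝ))
    simpa using this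
  -- Busemann bounds along the connecting segments
  have hsegb : ∀ j : ℕ, ∀ lam ∈ Set.Icc (0:ℝ) 1,
      busemann c (γ j lam) ≤ m₀ ∧ busemann c' (γ j lam) ≤ m₀ := by
    intro j lam hlam
    have h1 := busemann_convex hX hc (hγ j) hlam
    have h2 := busemann_convex hX hc' (hγ j) hlam
    have ho1 : busemann c o = 0 := by rw [← hco]; exact hbco
    have ho2 : busemann c' o = 0 := by rw [← hc'o]; exact hbc'o
    rw [ho1] at h1
    rw [ho2] at h2
    obtain ⟨hb1, hb2⟩ := hmem' (x j) (hxS j)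
    obtain ⟨hl0, hl1⟩ := hlam
    constructor
    · nlinarith
    · nlinarith
  -- Busemann bounds along the limit ray
  have hbc₂ : ∀ τ, 0 ≤ τ → busemann c (c₂ τ) ≤ m₀ := by
    intro τ hτ
    refine le_of_forall_pos_le_add (fun ε hε => ?_)
    obtain ⟨j, lam, hlam, hd⟩ := happrox τ ε hτ hε
    have := busemann_le_add hc (c₂ τ) (γ j lam)
    have hb := (hsegb j lam hlam).1
    linarith
  have hbc₂' : ∀ τ, 0 ≤ τ → busemann c' (c₂ τ) ≤ m₀ := by
    intro τ hτ
    refine le_of_forall_pos_le_add (fun ε hε => ?_)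
    obtain ⟨j, lam, hlam, hd⟩ := happrox τ ε hτ hε
    have := busemann_le_add hc' (c₂ τ) (γ j lam)
    have hb := (hsegb j lam hlam).2
    linarith
  have hc₂c0 : c₂ 0 = c 0 := by rw [hc₂0, hco]
  have hc₂c'0 : c₂ 0 = c' 0 := by rw [hc₂0, hc'o]
  have hbc₂0 : ∀ τ, 0 ≤ τ → busemann c (c₂ τ) ≤ 0 :=
    busemann_ray_nonpos hX hc hc₂ray hc₂c0 hbc₂
  have hbc₂0' : ∀ τ, 0 ≤ τ → busemann c' (c₂ τ) ≤ 0 :=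
    busemann_ray_nonpos hX hc' hc₂ray hc₂c'0 hbc₂'
  -- case split on whether the limit ray coincides with c
  by_cases hcc : ∀ s, 0 ≤ s → c₂ s = c s
  · -- c₂ = c, so c stays in the horoball of c'; deduce c' stays in the horoball of c
    have hbc'c : ∀ s, 0 ≤ s → busemann c' (c s) ≤ 0 := by
      intro s hs
      have := hbc₂0' s hs
      rwa [hcc s hs] at this
    have hbcc' : ∀ s, 0 ≤ s → busemann c (c' s) ≤ 0 := by
      intro s hs
      refine le_of_forall_pos_le_add (fun ε hε => ?_)
      set a := max 1 (s ^ 2 / (2 * ε)) with hadef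
      have ha1 : (1:ℝ) ≤ a := le_max_left _ _
      have ha0 : (0:ℝ) ≤ a := by linarith
      have hapos : (0:ℝ) < a := by linarith
      have haε : s ^ 2 / (2 * ε) ≤ a := le_max_right _ _
      have hL4 := busemann_dist_sq hX hc' (c a) (a := s) hs
      have e1 : dist (c' 0) (c a) = a := by
        rw [hc'o, ← hco]
        exact ray_dist_zero hc ha0
      rw [e1] at hL4
      have hb0 : busemann c' (c a) ≤ 0 := hbc'c a ha0
      have hsq : dist (c a) (c' s) ^ 2 ≤ (a + s ^ 2 / (2 * a)) ^ 2 := by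
        have hw : (0:ℝ) ≤ s ^ 2 / (2 * a) := by positivity
        have : 2 * s * busemann c' (c a) ≤ 0 := by nlinarith
        have hexp : (a + s ^ 2 / (2 * a)) ^ 2
            = a ^ 2 + s ^ 2 + (s ^ 2 / (2 * a)) ^ 2 := by
          field_simp
          ring
        nlinarith [sq_nonneg (s ^ 2 / (2 * a))]
      have hdle : dist (c a) (c' s) ≤ a + s ^ 2 / (2 * a) := by
        have := Real.sqrt_le_sqrt hsq
        rwa [Real.sqrt_sq dist_nonneg, Real.sqrt_sq (by positivity)] at this
      have hble := busemann_le hc (c' s) ha0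
      rw [dist_comm (c a) (c' s)] at hdle
      have hfrac : s ^ 2 / (2 * a) ≤ ε := by
        rw [div_le_iff₀ (by positivity)]
        rw [div_le_iff₀ (by positivity : (0:ℝ) < 2 * ε)] at haε
        nlinarith
      linarith
    -- now apply the key contradiction with c₂ := c'
    obtain ⟨t₀, ht₀0, hnet₀⟩ := hdist
    have ht₀pos : 0 < t₀ := by
      rcases eq_or_lt_of_le ht₀0 with hh0 | hh0
      · exfalso
        apply hnet₀
        rw [← hh0, hco, hc'o]
      · exact hh0
    have hc'c0 : c' 0 = c 0 := by rw [hc'o, hco]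
    obtain ⟨n, hn, hball⟩ := hbgi c' hc' hc'c0
    exact key_contradiction hX hc hproj hc' hc'c0 hn hball ht₀pos (Ne.symm hnet₀) hbcc'
  · push_neg at hcc
    obtain ⟨s, hs0, hnes⟩ := hcc
    have hspos : 0 < s := by
      rcases eq_or_lt_of_le hs0 with hh0 | hh0
      · exfalso
        apply hnes
        rw [← hh0, hc₂0, hco]
      · exact hh0
    obtain ⟨n, hn, hball⟩ := hbgi c₂ hc₂ray hc₂c0
    exact key_contradiction hX hc hproj hc₂ray hc₂c0 hn hball hspos hnes hbc₂0
end
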